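/- arXiv:0907.0314 — 4 statements merged into one kernel-verified Lean document; each statement's English description precedes it below -/
import Mathlib

section
/- Every ideal I of M₂(ℝ̄) is either principal, or equal to the set difference of a principal ideal and the 𝓙-class of a generator of that principal ideal: i.e. there exists A ∈ M₂(ℝ̄) such that I = {X ⊗ A ⊗ Y : X, Y ∈ M₂(ℝ̄)} \ {B ∈ M₂(ℝ̄) : B 𝓙 A}. -/
open scoped Classical ENNReal

/-- The tropical semiring `ℝ̄ = ℝ ∪ {-∞}`, carried by `WithBot ℝ`;
tropical addition is `max` and tropical multiplication is `+`. -/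
abbrev Rb : Type := WithBot ℝ

/-- Tropical matrix multiplication. -/
noncomputable def tMul {n : ℕ} (A B : Fin n → Fin n → Rb) : Fin n → Fin n → Rb :=
  fun i j => Finset.univ.sup fun k => A i k + B k j

/-- The column space of a matrix: all tropical linear combinations of its columns. -/
def ColSpace {n : ℕ} (A : Fin n → Fin n → Rb) : Set (Fin n → Rb) :=
  {v | ∃ c : Fin n → Rb, ∀ i, v i = Finset.univ.sup fun j => c j + A i j}

/-- The row space of a matrix: all tropical linear combinations of its rows. -/
def RowSpace {n : ℕ} (A : Fin n → Fin n → Rb) : Set (Fin n → Rb) :=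
  {v | ∃ c : Fin n → Rb, ∀ j, v j = Finset.univ.sup fun i => c i + A i j}

abbrev Mat2 : Type := Fin 2 → Fin 2 → Rb

/-- Inclusion of `ℝ̄` into the projective line `ℝ̂ = ℝ ∪ {-∞, +∞}` (modelled by `EReal`). -/
noncomputable def toE : Rb → EReal := WithBot.recBotCoe ⊥ (fun r : ℝ => (r : EReal))

/-- Projection of a vector `(a, b)` to `b - a ∈ ℝ̂`. -/
noncomputable def projPt (v : Fin 2 → Rb) : EReal := toE (v 1) - toE (v 0)

def zeroVec : Fin 2 → Rb := fun _ => ⊥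

/-- Projective column space. -/
noncomputable def PC (A : Mat2) : Set EReal :=
  {z | ∃ v ∈ ColSpace A, v ≠ zeroVec ∧ projPt v = z}

/-- Projective row space. -/
noncomputable def PR (A : Mat2) : Set EReal :=
  {z | ∃ v ∈ RowSpace A, v ≠ zeroVec ∧ projPt v = z}

/-- The metric `δ` on `ℝ̂`. -/
noncomputable def delta (x y : EReal) : ℝ≥0∞ :=
  if (∃ a : ℝ, x = (a : EReal)) ∧ (∃ b : ℝ, y = (b : EReal)) then
    ENNReal.ofReal |x.toReal - y.toReal|
  else if x = y then 0 else ⊤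

/-- `M` embeds isometrically into `N`. -/
def IsomEmbed (M N : Set EReal) : Prop :=
  ∃ f : EReal → EReal, Set.MapsTo f M N ∧ Set.InjOn f M ∧
    ∀ x ∈ M, ∀ y ∈ M, delta (f x) (f y) = delta x y

/-- `M` and `N` are isometric. -/
def Isom (M N : Set EReal) : Prop :=
  ∃ f : EReal → EReal, Set.BijOn f M N ∧
    ∀ x ∈ M, ∀ y ∈ M, delta (f x) (f y) = delta x y

/-- Closed convex subsets of `ℝ̂`: the empty set, singletons and closed intervals. -/
def IsClosedConvex (S : Set EReal) : Prop :=
  S = ∅ ∨ ∃ x y : EReal, x ≤ y ∧ S = Set.Icc x y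

/-- An ideal of the monoid of `2 × 2` tropical matrices. -/
noncomputable def IsIdeal (I : Set Mat2) : Prop :=
  I.Nonempty ∧ ∀ A ∈ I, ∀ X Y : Mat2, tMul (tMul X A) Y ∈ I

/-- `A ≤_J B` iff `A = X ⊗ B ⊗ Y` for some `X, Y`. -/
noncomputable def leJ (A B : Mat2) : Prop := ∃ X Y, A = tMul (tMul X B) Y

/-- Green's relation `𝓙`. -/
noncomputable def relJ (A B : Mat2) : Prop := leJ A B ∧ leJ B A

/-- The principal (two-sided) ideal generated by `A`. -/
noncomputable def pIdeal (A : Mat2) : Set Mat2 := {Z | ∃ X Y : Mat2, Z = tMul (tMul X A) Y}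

/-!
The `𝓙`-order of `M₂(ℝ̄)` is a complete chain. Let `d(A) ∈ [0, ∞]` be the distance between the
two terms `A₀₀ + A₁₁` and `A₀₁ + A₁₀` of the tropical permanent, where `-∞` is infinitely far
from every real number. Tropical multiplication never increases `d`: each of the four terms of
`(XA)₀₀ + (XA)₁₁` is a term of `(XA)₀₁ + (XA)₁₀`, up to exchanging `A₀₀ + A₁₁` with
`A₀₁ + A₁₀`. Conversely, diagonal scalings and row and column swaps bring every matrix into the
`𝓙`-class of the zero matrix, of `[[0, 0], [0, ℓ]]` with `ℓ = d(A) < ∞`, of `[[0, 0], [-∞, 0]]`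
(when `d(A) = ∞` and `A` is not a unit) or of the identity, and these normal forms are ordered
by `d`. So the `𝓙`-classes form the complete linear order `⊥ < [0, ∞] < ⊤`, and an ideal, a
lower set of this chain, consists of the classes below or strictly below its supremum.
-/

theorem IsLowerSet.eq_Iic_sSup_or_eq_Iio_sSup {α : Type*} [CompleteLinearOrder α] {s : Set α}
    (hs : IsLowerSet s) : s = Set.Iic (sSup s) ∨ s = Set.Iio (sSup s) := by
  by_cases h : sSup s ∈ s
  · exact Or.inl (Set.ext fun x => ⟨fun hx => le_sSup hx, fun hx => hs hx h⟩)
  · refine Or.inr (Set.ext fun x => ⟨fun hx => (le_sSup hx).lt_of_ne ?_, fun hx => ?_⟩)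
    · rintro rfl; exact h hx
    · obtain ⟨y, hy, hxy⟩ := lt_sSup_iff.mp hx
      exact hs hxy.le hy

theorem Function.Surjective.eq_preimage_Iic_or_eq_preimage_Iio {β α : Type*}
    [CompleteLinearOrder α] {f : β → α} (hf : Function.Surjective f) {s : Set β}
    (hs : ∀ a ∈ s, ∀ b, f b ≤ f a → b ∈ s) :
    (∃ a, s = f ⁻¹' Set.Iic (f a)) ∨ ∃ a, s = f ⁻¹' Set.Iio (f a) := by
  have hlow : IsLowerSet (f '' s) := by
    rintro _ y hy ⟨a, ha, rfl⟩
    obtain ⟨b, rfl⟩ := hf y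
    exact ⟨b, hs a ha b hy, rfl⟩
  have hsat : s = f ⁻¹' (f '' s) :=
    (Set.subset_preimage_image f s).antisymm fun b ⟨a, ha, hab⟩ => hs a ha b hab.ge
  obtain ⟨a, ha⟩ := hf (sSup (f '' s))
  rcases hlow.eq_Iic_sSup_or_eq_Iio_sSup with h | h
  · exact Or.inl ⟨a, hsat.trans (by rw [h, ha])⟩
  · exact Or.inr ⟨a, hsat.trans (by rw [h, ha])⟩

namespace Mat2

open scoped NNReal

lemma tMul_apply (A B : Mat2) (i j : Fin 2) :
    tMul A B i j = (A i 0 + B 0 j) ⊔ (A i 1 + B 1 j) := by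
  simp [tMul, Fin.univ_succ]

lemma tMul_assoc (A B C : Mat2) : tMul (tMul A B) C = tMul A (tMul B C) := by
  funext i j
  simp only [tMul_apply, add_max, max_add, add_assoc]
  exact sup_sup_sup_comm _ _ _ _

lemma bot_tMul (A : Mat2) : tMul ⊥ A = ⊥ := by
  funext i j; simp [tMul_apply]

lemma tMul_bot (A : Mat2) : tMul A ⊥ = ⊥ := by
  funext i j; simp [tMul_apply]

noncomputable def diag (u : Fin 2 → Rb) : Mat2 := fun i j => if i = j then u i else ⊥

noncomputable def one : Mat2 := diag 0

lemma diag_tMul (u : Fin 2 → Rb) (A : Mat2) : tMul (diag u) A = fun i j => u i + A i j := by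
  funext i j; fin_cases i <;> simp [tMul_apply, diag]

lemma tMul_diag (A : Mat2) (v : Fin 2 → Rb) : tMul A (diag v) = fun i j => A i j + v j := by
  funext i j; fin_cases j <;> simp [tMul_apply, diag]

lemma one_tMul (A : Mat2) : tMul one A = A := by
  simp [one, diag_tMul]

lemma tMul_one (A : Mat2) : tMul A one = A := by
  simp [one, tMul_diag]

noncomputable def swap : Mat2 := fun i j => if i = j then ⊥ else 0

lemma swap_tMul (A : Mat2) : tMul swap A = fun i j => A i.rev j := by
  funext i j; fin_cases i <;> simp [tMul_apply, swap]

lemma tMul_swap (A : Mat2) : tMul A swap = fun i j => A i j.rev := by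
  funext i j; fin_cases j <;> simp [tMul_apply, swap]

lemma revRows_tMul (X A : Mat2) :
    tMul (fun i j => X i.rev j) A = fun i j => tMul X A i.rev j := rfl

lemma mem_pIdeal_self (A : Mat2) : A ∈ pIdeal A :=
  ⟨one, one, by rw [one_tMul, tMul_one]⟩

lemma mem_pIdeal_trans {A B C : Mat2} (hB : B ∈ pIdeal C) (hC : C ∈ pIdeal A) : B ∈ pIdeal A := by
  obtain ⟨X, Y, rfl⟩ := hB
  obtain ⟨X', Y', rfl⟩ := hC
  exact ⟨tMul X X', tMul Y' Y, by simp only [tMul_assoc]⟩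

lemma bot_mem_pIdeal (A : Mat2) : ⊥ ∈ pIdeal A :=
  ⟨⊥, ⊥, by rw [bot_tMul, bot_tMul]⟩

lemma eq_bot_of_mem_pIdeal_bot {B : Mat2} (h : B ∈ pIdeal ⊥) : B = ⊥ := by
  obtain ⟨X, Y, rfl⟩ := h
  rw [tMul_bot, bot_tMul]

lemma mem_pIdeal_one (B : Mat2) : B ∈ pIdeal one :=
  ⟨B, one, by rw [tMul_one, tMul_one]⟩

lemma scale_mem_pIdeal (u v : Fin 2 → Rb) (A : Mat2) :
    (fun i j => u i + A i j + v j) ∈ pIdeal A :=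
  ⟨diag u, diag v, by rw [diag_tMul, tMul_diag]⟩

lemma relJ_scale (u v : Fin 2 → ℝ) (A : Mat2) :
    relJ (fun i j => (u i : Rb) + A i j + v j) A := by
  refine ⟨scale_mem_pIdeal _ _ A, ?_⟩
  show A ∈ pIdeal _
  convert scale_mem_pIdeal (fun i => ((-u i : ℝ) : Rb)) (fun j => ((-v j : ℝ) : Rb)) _ using 1
  funext i j
  rw [add_assoc, add_assoc, ← WithBot.coe_add (v j), add_neg_cancel, WithBot.coe_zero, add_zero,
    ← add_assoc, ← WithBot.coe_add, neg_add_cancel, WithBot.coe_zero, zero_add]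

lemma relJ_symm {A B : Mat2} (h : relJ A B) : relJ B A := ⟨h.2, h.1⟩

lemma relJ_trans {A B C : Mat2} (h₁ : relJ A B) (h₂ : relJ B C) : relJ A C :=
  ⟨mem_pIdeal_trans h₁.1 h₂.1, mem_pIdeal_trans h₂.2 h₁.2⟩

lemma relJ_revRows (A : Mat2) : relJ (fun i j => A i.rev j) A :=
  ⟨⟨swap, one, by rw [swap_tMul, tMul_one]⟩,
    ⟨swap, one, by rw [swap_tMul, tMul_one]; simp only [Fin.rev_rev]⟩⟩

lemma relJ_revCols (A : Mat2) : relJ (fun i j => A i j.rev) A :=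
  ⟨⟨one, swap, by rw [one_tMul, tMul_swap]⟩,
    ⟨one, swap, by rw [one_tMul, tMul_swap]; simp only [Fin.rev_rev]⟩⟩

noncomputable def tdist : Rb → Rb → ℝ≥0∞
  | none, none => 0
  | some a, some b => edist a b
  | _, _ => ⊤

@[simp] lemma tdist_bot_bot : tdist ⊥ ⊥ = 0 := rfl
@[simp] lemma tdist_coe_coe (a b : ℝ) : tdist a b = edist a b := rfl
@[simp] lemma tdist_coe_bot (a : ℝ) : tdist a ⊥ = ⊤ := rfl
@[simp] lemma tdist_bot_coe (b : ℝ) : tdist ⊥ b = ⊤ := rfl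

lemma tdist_le_coe_iff (x y : Rb) (k : ℝ≥0) :
    tdist x y ≤ k ↔ x ≤ y + ((k : ℝ) : Rb) ∧ y ≤ x + ((k : ℝ) : Rb) := by
  induction x using WithBot.recBotCoe <;> induction y using WithBot.recBotCoe
  · simp
  · simp
  · simp
  · rename_i a b
    rw [tdist_coe_coe, edist_le_coe, ← NNReal.coe_le_coe, coe_nndist, Real.dist_eq,
      abs_sub_le_iff, ← WithBot.coe_add, ← WithBot.coe_add, WithBot.coe_le_coe, WithBot.coe_le_coe]
    constructor <;> rintro ⟨h₁, h₂⟩ <;> constructor <;> linarith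

lemma tdist_eq_zero_iff {x y : Rb} : tdist x y = 0 ↔ x = y := by
  have h := tdist_le_coe_iff x y 0
  simp only [nonpos_iff_eq_zero, ENNReal.coe_zero, NNReal.coe_zero, WithBot.coe_zero, add_zero] at h
  rw [h, le_antisymm_iff]

lemma tdist_eq_top_iff {x y : Rb} : tdist x y = ⊤ ↔ (x = ⊥ ↔ y ≠ ⊥) := by
  induction x using WithBot.recBotCoe <;> induction y using WithBot.recBotCoe <;>
    simp [edist_ne_top]

def diagTerm (A : Mat2) : Rb := A 0 0 + A 1 1

def antidiagTerm (A : Mat2) : Rb := A 0 1 + A 1 0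

lemma diagTerm_revRows (M : Mat2) : diagTerm (fun i j => M i.rev j) = antidiagTerm M :=
  add_comm _ _

lemma antidiagTerm_revRows (M : Mat2) : antidiagTerm (fun i j => M i.rev j) = diagTerm M :=
  add_comm _ _

noncomputable def detGap (A : Mat2) : ℝ≥0∞ := tdist (diagTerm A) (antidiagTerm A)

lemma diagTerm_tMul_le (X A : Mat2) {k : Rb} (hk : 0 ≤ k)
    (h₁ : diagTerm A ≤ antidiagTerm A + k) (h₂ : antidiagTerm A ≤ diagTerm A + k) :
    diagTerm (tMul X A) ≤ antidiagTerm (tMul X A) + k := by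
  simp only [diagTerm, antidiagTerm, tMul_apply] at *
  have hP : ∀ p q, p ≤ (X 0 0 + A 0 1) ⊔ (X 0 1 + A 1 1) → q ≤ (X 1 0 + A 0 0) ⊔ (X 1 1 + A 1 0) →
      p + q + k ≤ ((X 0 0 + A 0 1) ⊔ (X 0 1 + A 1 1)) + ((X 1 0 + A 0 0) ⊔ (X 1 1 + A 1 0)) + k :=
    fun p q hp hq => by gcongr
  rw [max_add, add_max, add_max]
  refine max_le (max_le ?_ ?_) (max_le ?_ ?_)
  · calc X 0 0 + A 0 0 + (X 1 0 + A 0 1) = X 0 0 + A 0 1 + (X 1 0 + A 0 0) := by abel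
      _ ≤ X 0 0 + A 0 1 + (X 1 0 + A 0 0) + k := le_add_of_nonneg_right hk
      _ ≤ _ := hP _ _ le_sup_left le_sup_left
  · calc X 0 0 + A 0 0 + (X 1 1 + A 1 1) = X 0 0 + X 1 1 + (A 0 0 + A 1 1) := by abel
      _ ≤ X 0 0 + X 1 1 + (A 0 1 + A 1 0 + k) := by gcongr
      _ = X 0 0 + A 0 1 + (X 1 1 + A 1 0) + k := by abel
      _ ≤ _ := hP _ _ le_sup_left le_sup_right
  · calc X 0 1 + A 1 0 + (X 1 0 + A 0 1) = X 0 1 + X 1 0 + (A 0 1 + A 1 0) := by abel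
      _ ≤ X 0 1 + X 1 0 + (A 0 0 + A 1 1 + k) := by gcongr
      _ = X 0 1 + A 1 1 + (X 1 0 + A 0 0) + k := by abel
      _ ≤ _ := hP _ _ le_sup_right le_sup_left
  · calc X 0 1 + A 1 0 + (X 1 1 + A 1 1) = X 0 1 + A 1 1 + (X 1 1 + A 1 0) := by abel
      _ ≤ X 0 1 + A 1 1 + (X 1 1 + A 1 0) + k := le_add_of_nonneg_right hk
      _ ≤ _ := hP _ _ le_sup_right le_sup_right

lemma detGap_tMul_left_le (X A : Mat2) : detGap (tMul X A) ≤ detGap A := by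
  refine le_of_forall_ge fun c hc => ?_
  induction c using ENNReal.recTopCoe with
  | top => exact le_top
  | coe k =>
    rw [detGap, tdist_le_coe_iff] at hc ⊢
    have hk : (0 : Rb) ≤ ((k : ℝ) : Rb) := WithBot.coe_le_coe.mpr k.2
    refine ⟨diagTerm_tMul_le X A hk hc.1 hc.2, ?_⟩
    simpa only [revRows_tMul, diagTerm_revRows, antidiagTerm_revRows] using
      diagTerm_tMul_le (fun i j => X i.rev j) A hk hc.1 hc.2

lemma detGap_transpose (A : Mat2) : detGap (fun i j => A j i) = detGap A := by
  simp only [detGap, diagTerm, antidiagTerm, add_comm (A 1 0)]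

lemma transpose_tMul (A B : Mat2) :
    (fun i j => tMul A B j i) = tMul (fun i j => B j i) (fun i j => A j i) := by
  funext i j; simp only [tMul_apply, add_comm (A _ _)]

lemma detGap_tMul_right_le (A Y : Mat2) : detGap (tMul A Y) ≤ detGap A := by
  rw [← detGap_transpose, transpose_tMul, ← detGap_transpose A]
  exact detGap_tMul_left_le _ _

lemma detGap_le_of_mem_pIdeal {A B : Mat2} (h : B ∈ pIdeal A) : detGap B ≤ detGap A := by
  obtain ⟨X, Y, rfl⟩ := h
  exact (detGap_tMul_right_le _ Y).trans (detGap_tMul_left_le X A)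

lemma detGap_eq_of_relJ {A B : Mat2} (h : relJ B A) : detGap B = detGap A :=
  (detGap_le_of_mem_pIdeal h.1).antisymm (detGap_le_of_mem_pIdeal h.2)

noncomputable def gapMat (t : ℝ) : Mat2 := fun i j => if i = 1 ∧ j = 1 then (t : Rb) else 0

noncomputable def upperTri : Mat2 := fun i j => if i = 1 ∧ j = 0 then ⊥ else 0

lemma gapMat_zero : gapMat 0 = fun _ _ => 0 := by
  funext i j; simp [gapMat]

lemma detGap_coe (b : Fin 2 → Fin 2 → ℝ) :
    detGap (fun i j => (b i j : Rb)) = ENNReal.ofReal |b 0 0 + b 1 1 - (b 0 1 + b 1 0)| := by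
  rw [detGap, diagTerm, antidiagTerm, ← WithBot.coe_add, ← WithBot.coe_add, tdist_coe_coe,
    edist_dist, Real.dist_eq]

lemma detGap_gapMat {t : ℝ} (ht : 0 ≤ t) : detGap (gapMat t) = ENNReal.ofReal t := by
  have h : gapMat t = fun i j => ((if i = 1 ∧ j = 1 then t else 0 : ℝ) : Rb) := by
    funext i j; simp only [gapMat]; split_ifs <;> rfl
  rw [h, detGap_coe]; simp [abs_of_nonneg ht]

lemma detGap_upperTri : detGap upperTri = ⊤ := by
  simp [detGap, diagTerm, antidiagTerm, upperTri, tdist_eq_top_iff]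

lemma detGap_one : detGap one = ⊤ := by
  simp [detGap, diagTerm, antidiagTerm, one, diag, tdist_eq_top_iff]

lemma relJ_gapMat_of_coe (b : Fin 2 → Fin 2 → ℝ) :
    relJ (fun i j => (b i j : Rb)) (gapMat (b 0 0 + b 1 1 - (b 0 1 + b 1 0))) := by
  convert relJ_scale ![b 0 0, b 1 0] ![0, b 0 1 - b 0 0] (gapMat _) using 1
  funext i j
  fin_cases i <;> fin_cases j <;> simp [gapMat] <;> norm_cast <;> ring

lemma relJ_gapMat_abs (b : Fin 2 → Fin 2 → ℝ) :
    relJ (fun i j => (b i j : Rb)) (gapMat |b 0 0 + b 1 1 - (b 0 1 + b 1 0)|) := by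
  rcases le_or_gt 0 (b 0 0 + b 1 1 - (b 0 1 + b 1 0)) with h | h
  · rw [abs_of_nonneg h]; exact relJ_gapMat_of_coe b
  · refine relJ_trans (relJ_symm (relJ_revRows _)) ?_
    convert relJ_gapMat_of_coe (fun i j => b i.rev j) using 2
    rw [abs_of_neg h, neg_sub]
    simp only [Fin.rev_zero, Fin.reduceLast, Fin.reduceRev]
    ring

lemma gapMat_mem_pIdeal_gapMat {s t : ℝ} (hs : 0 ≤ s) (hst : s ≤ t) :
    gapMat s ∈ pIdeal (gapMat t) := by
  refine ⟨one, fun k j => if k = 0 then 0 else if j = 1 then ((s - t : ℝ) : Rb) else ⊥, ?_⟩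
  rw [one_tMul]
  funext i j
  fin_cases i <;> fin_cases j <;> simp [tMul_apply, gapMat]
  · exact_mod_cast hst
  · rw [← WithBot.coe_add, ← WithBot.coe_zero, ← WithBot.coe_max]
    norm_cast
    rw [max_eq_right (by linarith)]
    ring

lemma gapMat_mem_pIdeal_upperTri {s : ℝ} (hs : 0 ≤ s) : gapMat s ∈ pIdeal upperTri := by
  refine ⟨fun i k => if k = 0 then 0 else if i = 1 then (s : Rb) else ⊥, one, ?_⟩
  rw [tMul_one]
  funext i j
  fin_cases i <;> fin_cases j <;> simp [tMul_apply, gapMat, upperTri]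
  exact_mod_cast hs

lemma tMul_ne_one_of_row_le (X N : Mat2) (hN : ∀ j, N 1 j ≤ N 0 j) : tMul X N ≠ one := by
  intro h
  have n0 : N 0 0 = ⊥ → N 1 0 = ⊥ := fun h0 => le_bot_iff.mp (h0 ▸ hN 0)
  have n1 : N 0 1 = ⊥ → N 1 1 = ⊥ := fun h1 => le_bot_iff.mp (h1 ▸ hN 1)
  have e00 : tMul X N 0 0 ≠ ⊥ := by simp [h, one, diag]
  have e11 : tMul X N 1 1 ≠ ⊥ := by simp [h, one, diag]
  have e01 : tMul X N 0 1 = ⊥ := by simp [h, one, diag]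
  have e10 : tMul X N 1 0 = ⊥ := by simp [h, one, diag]
  simp only [tMul_apply, ne_eq, max_eq_bot, WithBot.add_eq_bot] at e00 e01 e10 e11
  tauto

lemma one_notMem_pIdeal_upperTri : one ∉ pIdeal upperTri := by
  rintro ⟨X, Y, h⟩
  rw [tMul_assoc] at h
  refine tMul_ne_one_of_row_le X _ (fun j => ?_) h.symm
  simp [tMul_apply, upperTri]

lemma exists_relJ_apply_zero_zero_ne_bot {A : Mat2} (hA : A ≠ ⊥) :
    ∃ A', relJ A' A ∧ A' 0 0 ≠ ⊥ := by
  obtain ⟨i, j, hij⟩ : ∃ i j, A i j ≠ ⊥ := by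
    by_contra! h
    exact hA (funext fun i => funext (h i))
  fin_cases i <;> fin_cases j
  · exact ⟨A, ⟨mem_pIdeal_self A, mem_pIdeal_self A⟩, hij⟩
  · exact ⟨_, relJ_revCols A, hij⟩
  · exact ⟨_, relJ_revRows A, hij⟩
  · exact ⟨_, relJ_trans (relJ_revRows _) (relJ_revCols A), hij⟩

lemma gapMat_zero_mem_pIdeal {A : Mat2} (hA : A ≠ ⊥) : gapMat 0 ∈ pIdeal A := by
  obtain ⟨A', hA', h⟩ := exists_relJ_apply_zero_zero_ne_bot hA
  obtain ⟨r, hr⟩ := WithBot.ne_bot_iff_exists.mp h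
  refine mem_pIdeal_trans ⟨fun _ k => if k = 0 then ((-r : ℝ) : Rb) else ⊥,
    fun k _ => if k = 0 then 0 else ⊥, ?_⟩ hA'.1
  funext i j
  simp [tMul_apply, gapMat_zero, ← hr, ← WithBot.coe_add]

lemma mem_pIdeal_gapMat_zero {B : Mat2} (hB : detGap B = 0) : B ∈ pIdeal (gapMat 0) := by
  by_cases hB0 : B = ⊥
  · rw [hB0]; exact bot_mem_pIdeal _
  obtain ⟨B', hB', h⟩ := exists_relJ_apply_zero_zero_ne_bot hB0
  obtain ⟨r, hr⟩ := WithBot.ne_bot_iff_exists.mp h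
  have hsing : (r : Rb) + B' 1 1 = B' 0 1 + B' 1 0 := by
    rw [hr]; exact tdist_eq_zero_iff.mp ((detGap_eq_of_relJ hB').trans hB)
  have cancel : ∀ x : Rb, x + r + ((-r : ℝ) : Rb) = x := fun x => by
    rw [add_assoc, ← WithBot.coe_add, add_neg_cancel, WithBot.coe_zero, add_zero]
  refine mem_pIdeal_trans hB'.2 ?_
  convert scale_mem_pIdeal ![0, B' 1 0 + ((-r : ℝ) : Rb)] (B' 0) (gapMat 0) using 1
  funext i j
  fin_cases i <;> fin_cases j <;> simp [gapMat_zero]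
  · rw [← hr, add_right_comm, cancel]
  · rw [add_right_comm, add_comm (B' 1 0), ← hsing, add_comm (r : Rb), cancel]

lemma relJ_upperTri_of_apply {B : Mat2} {a b d : ℝ} (h00 : B 0 0 = a) (h01 : B 0 1 = b)
    (h10 : B 1 0 = ⊥) (h11 : B 1 1 = d) : relJ B upperTri := by
  convert relJ_scale ![a, d - b + a] ![0, b - a] upperTri using 1
  funext i j
  fin_cases i <;> fin_cases j <;> simp [upperTri, h00, h01, h10, h11] <;> norm_cast <;> ring

lemma relJ_one_of_apply {B : Mat2} {a d : ℝ} (h00 : B 0 0 = a) (h01 : B 0 1 = ⊥)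
    (h10 : B 1 0 = ⊥) (h11 : B 1 1 = d) : relJ B one := by
  convert relJ_scale ![a, d] 0 one using 1
  funext i j
  fin_cases i <;> fin_cases j <;> simp [one, diag, h00, h01, h10, h11]

lemma one_mem_pIdeal_or_relJ_upperTri_of_antidiagTerm_eq_bot {B : Mat2}
    (hd : diagTerm B ≠ ⊥) (ha : antidiagTerm B = ⊥) : one ∈ pIdeal B ∨ relJ B upperTri := by
  obtain ⟨h00, h11⟩ : B 0 0 ≠ ⊥ ∧ B 1 1 ≠ ⊥ := by
    simpa [diagTerm, WithBot.add_eq_bot, not_or] using hd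
  obtain ⟨a, ha'⟩ := WithBot.ne_bot_iff_exists.mp h00
  obtain ⟨d, hd'⟩ := WithBot.ne_bot_iff_exists.mp h11
  by_cases h01 : B 0 1 = ⊥ <;> by_cases h10 : B 1 0 = ⊥
  · exact Or.inl (relJ_one_of_apply ha'.symm h01 h10 hd'.symm).2
  · obtain ⟨c, hc⟩ := WithBot.ne_bot_iff_exists.mp h10
    refine Or.inr (relJ_trans (relJ_symm (relJ_trans (relJ_revRows _) (relJ_revCols B))) ?_)
    exact relJ_upperTri_of_apply hd'.symm hc.symm h01 ha'.symm
  · obtain ⟨b, hb⟩ := WithBot.ne_bot_iff_exists.mp h01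
    exact Or.inr (relJ_upperTri_of_apply ha'.symm hb.symm h10 hd'.symm)
  · exact absurd ha (by simp [antidiagTerm, WithBot.add_eq_bot, h01, h10])

lemma one_mem_pIdeal_or_relJ_upperTri {B : Mat2} (h : detGap B = ⊤) :
    one ∈ pIdeal B ∨ relJ B upperTri := by
  rw [detGap, tdist_eq_top_iff] at h
  by_cases hd : diagTerm B = ⊥
  · have hB := relJ_revRows B
    rcases one_mem_pIdeal_or_relJ_upperTri_of_antidiagTerm_eq_bot
        (by rw [diagTerm_revRows]; exact h.mp hd) (by rw [antidiagTerm_revRows]; exact hd)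
      with h' | h'
    · exact Or.inl (mem_pIdeal_trans h' hB.1)
    · exact Or.inr (relJ_trans (relJ_symm hB) h')
  · exact one_mem_pIdeal_or_relJ_upperTri_of_antidiagTerm_eq_bot hd (not_not.mp (mt h.mpr hd))

lemma detGap_eq_zero_or_eq_top_or_coe (A : Mat2) :
    detGap A = 0 ∨ detGap A = ⊤ ∨ ∃ b : Fin 2 → Fin 2 → ℝ, A = fun i j => (b i j : Rb) := by
  by_cases hd : diagTerm A = ⊥ <;> by_cases ha : antidiagTerm A = ⊥
  · left; rw [detGap, hd, ha]; rfl
  · exact Or.inr (Or.inl (tdist_eq_top_iff.mpr (iff_of_true hd ha)))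
  · exact Or.inr (Or.inl (tdist_eq_top_iff.mpr (iff_of_false hd (not_not.mpr ha))))
  · have h : ∀ i j, A i j ≠ ⊥ := by
      simp only [diagTerm, antidiagTerm, WithBot.add_eq_bot, not_or] at hd ha
      intro i j; fin_cases i <;> fin_cases j <;> tauto
    exact Or.inr (Or.inr ⟨fun i j => (A i j).unbot (h i j),
      funext fun i => funext fun j => (WithBot.coe_unbot _ _).symm⟩)

noncomputable def normalForm (x : ℝ≥0∞) : Mat2 := if x = ⊤ then upperTri else gapMat x.toReal

lemma normalForm_top : normalForm ⊤ = upperTri := if_pos rfl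

lemma normalForm_ofReal {t : ℝ} (ht : 0 ≤ t) : normalForm (ENNReal.ofReal t) = gapMat t := by
  rw [normalForm, if_neg ENNReal.ofReal_ne_top, ENNReal.toReal_ofReal ht]

lemma normalForm_of_ne_top {x : ℝ≥0∞} (hx : x ≠ ⊤) : normalForm x = gapMat x.toReal := if_neg hx

lemma detGap_normalForm (x : ℝ≥0∞) : detGap (normalForm x) = x := by
  by_cases hx : x = ⊤
  · rw [hx, normalForm_top, detGap_upperTri]
  · rw [normalForm_of_ne_top hx, detGap_gapMat ENNReal.toReal_nonneg, ENNReal.ofReal_toReal hx]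

lemma normalForm_ne_bot (x : ℝ≥0∞) : normalForm x ≠ ⊥ := by
  intro h
  have h00 := congrFun (congrFun h 0) 0
  unfold normalForm at h00
  split_ifs at h00 <;> simp [upperTri, gapMat] at h00

lemma one_notMem_pIdeal_normalForm (x : ℝ≥0∞) : one ∉ pIdeal (normalForm x) := by
  by_cases hx : x = ⊤
  · rw [hx, normalForm_top]; exact one_notMem_pIdeal_upperTri
  · intro h
    have := detGap_le_of_mem_pIdeal h
    rw [detGap_one, detGap_normalForm, top_le_iff] at this
    exact hx this

lemma normalForm_mem_pIdeal_normalForm {x y : ℝ≥0∞} (h : x ≤ y) :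
    normalForm x ∈ pIdeal (normalForm y) := by
  by_cases hy : y = ⊤
  · by_cases hx : x = ⊤
    · rw [hx, hy]; exact mem_pIdeal_self _
    · rw [hy, normalForm_top, normalForm_of_ne_top hx]
      exact gapMat_mem_pIdeal_upperTri ENNReal.toReal_nonneg
  · rw [normalForm_of_ne_top hy, normalForm_of_ne_top (ne_top_of_le_ne_top hy h)]
    exact gapMat_mem_pIdeal_gapMat ENNReal.toReal_nonneg (ENNReal.toReal_mono hy h)

lemma normalForm_detGap_mem_pIdeal {A : Mat2} (hA : A ≠ ⊥) : normalForm (detGap A) ∈ pIdeal A := by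
  rcases detGap_eq_zero_or_eq_top_or_coe A with h | h | ⟨b, rfl⟩
  · rw [h, ← ENNReal.ofReal_zero, normalForm_ofReal le_rfl]
    exact gapMat_zero_mem_pIdeal hA
  · rw [h, normalForm_top]
    rcases one_mem_pIdeal_or_relJ_upperTri h with h' | h'
    · exact mem_pIdeal_trans (mem_pIdeal_one _) h'
    · exact h'.2
  · rw [detGap_coe, normalForm_ofReal (abs_nonneg _)]
    exact (relJ_gapMat_abs b).2

lemma mem_pIdeal_normalForm_detGap {B : Mat2} (hB : one ∉ pIdeal B) :
    B ∈ pIdeal (normalForm (detGap B)) := by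
  rcases detGap_eq_zero_or_eq_top_or_coe B with h | h | ⟨b, rfl⟩
  · rw [h, ← ENNReal.ofReal_zero, normalForm_ofReal le_rfl]
    exact mem_pIdeal_gapMat_zero h
  · rw [h, normalForm_top]
    exact ((one_mem_pIdeal_or_relJ_upperTri h).resolve_left hB).1
  · rw [detGap_coe, normalForm_ofReal (abs_nonneg _)]
    exact (relJ_gapMat_abs b).1

noncomputable def jRank (A : Mat2) : WithBot (WithTop ℝ≥0∞) :=
  if one ∈ pIdeal A then ⊤ else if A = ⊥ then ⊥ else ((detGap A : WithTop ℝ≥0∞) : WithBot _)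

lemma jRank_le_of_mem_pIdeal {A B : Mat2} (h : B ∈ pIdeal A) : jRank B ≤ jRank A := by
  by_cases hA : one ∈ pIdeal A
  · simp [jRank, hA]
  have hB : one ∉ pIdeal B := fun hB => hA (mem_pIdeal_trans hB h)
  by_cases hB0 : B = ⊥
  · subst hB0; simp [jRank, hB]
  have hA0 : A ≠ ⊥ := by rintro rfl; exact hB0 (eq_bot_of_mem_pIdeal_bot h)
  simp only [jRank, hA, hB, hA0, hB0, if_false, WithBot.coe_le_coe, WithTop.coe_le_coe]
  exact detGap_le_of_mem_pIdeal h

lemma mem_pIdeal_of_jRank_le {A B : Mat2} (h : jRank B ≤ jRank A) : B ∈ pIdeal A := by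
  by_cases hA : one ∈ pIdeal A
  · exact mem_pIdeal_trans (mem_pIdeal_one B) hA
  have hB : one ∉ pIdeal B := by
    intro hB
    simp only [jRank, hA, hB, if_true, if_false, top_le_iff] at h
    split_ifs at h <;> simp at h
  by_cases hB0 : B = ⊥
  · rw [hB0]; exact bot_mem_pIdeal A
  have hA0 : A ≠ ⊥ := by rintro rfl; simp [jRank, hA, hB, hB0] at h
  simp only [jRank, hA, hB, hA0, hB0, if_false, WithBot.coe_le_coe, WithTop.coe_le_coe] at h
  exact mem_pIdeal_trans (mem_pIdeal_normalForm_detGap hB)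
    (mem_pIdeal_trans (normalForm_mem_pIdeal_normalForm h) (normalForm_detGap_mem_pIdeal hA0))

lemma mem_pIdeal_iff_jRank_le {A B : Mat2} : B ∈ pIdeal A ↔ jRank B ≤ jRank A :=
  ⟨jRank_le_of_mem_pIdeal, mem_pIdeal_of_jRank_le⟩

lemma one_notMem_pIdeal_bot : one ∉ pIdeal ⊥ := fun h => by
  simpa [one, diag] using congrFun (congrFun (eq_bot_of_mem_pIdeal_bot h) 0) 0

lemma jRank_surjective : Function.Surjective jRank := by
  intro r
  induction r using WithBot.recBotCoe with
  | bot => exact ⟨⊥, by simp [jRank, one_notMem_pIdeal_bot]⟩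
  | coe r =>
    induction r using WithTop.recTopCoe with
    | top => exact ⟨one, by simp [jRank, mem_pIdeal_self]⟩
    | coe x => exact ⟨normalForm x, by
        simp [jRank, one_notMem_pIdeal_normalForm, normalForm_ne_bot, detGap_normalForm]⟩

lemma pIdeal_eq_preimage_Iic (A : Mat2) : pIdeal A = jRank ⁻¹' Set.Iic (jRank A) :=
  Set.ext fun _ => mem_pIdeal_iff_jRank_le

lemma pIdeal_diff_eq_preimage_Iio (A : Mat2) :
    pIdeal A \ {B | relJ B A} = jRank ⁻¹' Set.Iio (jRank A) := by
  ext B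
  change B ∈ pIdeal A ∧ ¬(B ∈ pIdeal A ∧ A ∈ pIdeal B) ↔ jRank B < jRank A
  rw [mem_pIdeal_iff_jRank_le, mem_pIdeal_iff_jRank_le, lt_iff_le_not_ge]
  tauto

end Mat2

/-- every ideal of `M₂(ℝ̄)` is either principal or the difference between a
principal ideal and the `𝓙`-class of its generator. -/
theorem ideal_principal_or_principal_minus_Jclass (I : Set Mat2) (hI : IsIdeal I) :
    (∃ A : Mat2, I = pIdeal A) ∨
    (∃ A : Mat2, I = pIdeal A \ {B : Mat2 | relJ B A}) := by
  have hdown : ∀ A ∈ I, ∀ B, Mat2.jRank B ≤ Mat2.jRank A → B ∈ I := fun A hA B hBA => by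
    obtain ⟨X, Y, rfl⟩ := Mat2.mem_pIdeal_iff_jRank_le.mpr hBA
    exact hI.2 A hA X Y
  rcases Mat2.jRank_surjective.eq_preimage_Iic_or_eq_preimage_Iio hdown with ⟨A, hA⟩ | ⟨A, hA⟩
  · exact Or.inl ⟨A, hA.trans (Mat2.pIdeal_eq_preimage_Iic A).symm⟩
  · exact Or.inr ⟨A, hA.trans (Mat2.pIdeal_diff_eq_preimage_Iio A).symm⟩
end

section
/- A matrix E ∈ M₂(ℝ̄) is idempotent (E ⊗ E = E) if and only if E is the zero matrix (all entries −∞), or there exist x, y ∈ ℝ̄ with x + y ≤ 0 such that E equals [[0, x],[y, x+y]], or [[0, x],[y, 0]], or [[x+y, x],[y, 0]]. -/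
open scoped Classical ENNReal

/-!
Write `E = [[a, b], [c, d]]`. Idempotency is the four equations `max(2a, b + c) = a`,
`max(a + b, b + d) = b`, `max(c + a, d + c) = c`, `max(b + c, 2d) = d`. The outer two give
`b + c ≤ a, d`, and since `0` and `-∞` are the only solutions of `t + t = t` in `ℝ̄`, they also give
`a = b + c` unless `a = 0`, and `d = b + c` unless `d = 0`. If neither diagonal entry is `0`, then
`a = d = b + c ≠ 0`, so the middle two equations read `a + b = b` and `a + c = c`, which forces
`b = c = -∞` and hence `E = -∞`.
-/

namespace WithBot

variable {α : Type*}

theorem eq_bot_of_add_eq_right [AddMonoid α] [IsRightCancelAdd α] {a b : WithBot α}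
    (h : a + b = b) (ha : a ≠ 0) : b = ⊥ := by
  induction b using WithBot.recBotCoe with
  | bot => rfl
  | coe s =>
    induction a using WithBot.recBotCoe with
    | bot => simp at h
    | coe r =>
      rw [← WithBot.coe_add, WithBot.coe_inj, add_eq_right] at h
      exact absurd (WithBot.coe_eq_zero.mpr h) ha

theorem eq_of_sup_add_self_eq [AddMonoid α] [IsRightCancelAdd α] [LinearOrder α]
    {p d : WithBot α} (h : p ⊔ (d + d) = d) (hd : d ≠ 0) : p = d := by
  have hpd : p ≤ d := h ▸ le_sup_left
  rcases max_choice p (d + d) with hp | hp <;> rw [hp] at h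
  · exact h
  · obtain rfl : d = ⊥ := eq_bot_of_add_eq_right h hd
    exact le_bot_iff.mp hpd

end WithBot

theorem tMul_vecCons (a b c d e f g h : Rb) :
    tMul ![![a, b], ![c, d]] ![![e, f], ![g, h]] =
      ![![(a + e) ⊔ (b + g), (a + f) ⊔ (b + h)], ![(c + e) ⊔ (d + g), (c + f) ⊔ (d + h)]] := by
  funext i j
  fin_cases i <;> fin_cases j <;> simp [tMul, Fin.univ_succ]

theorem tMul_self_vecCons_iff_sup (a b c d : Rb) :
    tMul ![![a, b], ![c, d]] ![![a, b], ![c, d]] = ![![a, b], ![c, d]] ↔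
      (a + a) ⊔ (b + c) = a ∧ (a + b) ⊔ (b + d) = b ∧ (c + a) ⊔ (d + c) = c ∧
        (b + c) ⊔ (d + d) = d := by
  rw [tMul_vecCons]
  simp only [Matrix.vecCons_inj, and_true, add_comm c b, and_assoc]

theorem entries_of_sup_eqs {a b c d : Rb} (h00 : (a + a) ⊔ (b + c) = a)
    (h01 : (a + b) ⊔ (b + d) = b) (h10 : (c + a) ⊔ (d + c) = c) (h11 : (b + c) ⊔ (d + d) = d) :
    (a = ⊥ ∧ b = ⊥ ∧ c = ⊥ ∧ d = ⊥) ∨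
      b + c ≤ 0 ∧ (a = 0 ∧ d = b + c ∨ a = 0 ∧ d = 0 ∨ a = b + c ∧ d = 0) := by
  rw [sup_comm] at h00
  have hbca : b + c ≤ a := h00 ▸ le_sup_left
  have hbcd : b + c ≤ d := h11 ▸ le_sup_left
  by_cases ha : a = 0 <;> by_cases hd : d = 0
  · exact .inr ⟨ha ▸ hbca, .inr (.inl ⟨ha, hd⟩)⟩
  · exact .inr ⟨ha ▸ hbca, .inl ⟨ha, (WithBot.eq_of_sup_add_self_eq h11 hd).symm⟩⟩
  · exact .inr ⟨hd ▸ hbcd, .inr (.inr ⟨(WithBot.eq_of_sup_add_self_eq h00 ha).symm, hd⟩)⟩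
  · have hbc : b + c = a := WithBot.eq_of_sup_add_self_eq h00 ha
    have hda : d = a := (WithBot.eq_of_sup_add_self_eq h11 hd).symm.trans hbc
    rw [hda, add_comm b a, sup_idem] at h01
    rw [hda, add_comm c a, sup_idem] at h10
    have hb : b = ⊥ := WithBot.eq_bot_of_add_eq_right h01 ha
    have hc : c = ⊥ := WithBot.eq_bot_of_add_eq_right h10 ha
    have hbot : a = ⊥ := by rw [← hbc, hb, WithBot.bot_add]
    exact .inl ⟨hbot, hb, hc, hda.trans hbot⟩

theorem tMul_self_vecCons_iff (a b c d : Rb) :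
    tMul ![![a, b], ![c, d]] ![![a, b], ![c, d]] = ![![a, b], ![c, d]] ↔
      (a = ⊥ ∧ b = ⊥ ∧ c = ⊥ ∧ d = ⊥) ∨
        b + c ≤ 0 ∧ (a = 0 ∧ d = b + c ∨ a = 0 ∧ d = 0 ∨ a = b + c ∧ d = 0) := by
  rw [tMul_self_vecCons_iff_sup]
  refine ⟨fun ⟨h00, h01, h10, h11⟩ => entries_of_sup_eqs h00 h01 h10 h11, ?_⟩
  rintro (⟨rfl, rfl, rfl, rfl⟩ | ⟨hbc, ⟨rfl, rfl⟩ | ⟨rfl, rfl⟩ | ⟨rfl, rfl⟩⟩)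
  · simp
  · simp [hbc, add_le_of_nonpos_right hbc, add_le_of_nonpos_left hbc]
  · simp [hbc]
  · simp [hbc, add_le_of_nonpos_right hbc, add_le_of_nonpos_left hbc]

/-- characterisation of the idempotent `2 × 2` tropical matrices. -/
theorem idempotent_characterisation (E : Mat2) :
    tMul E E = E ↔
      E = (fun _ _ => (⊥ : Rb)) ∨
      ∃ x y : Rb, x + y ≤ 0 ∧
        (E = ![![0, x], ![y, x + y]] ∨ E = ![![0, x], ![y, 0]] ∨
          E = ![![x + y, x], ![y, 0]]) := by
  obtain ⟨a, b, c, d, rfl⟩ : ∃ a b c d, E = ![![a, b], ![c, d]] :=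
    ⟨_, _, _, _, by ext i j; fin_cases i <;> fin_cases j <;> rfl⟩
  rw [tMul_self_vecCons_iff]
  simp only [funext_iff, Fin.forall_fin_two, Matrix.cons_val_zero, Matrix.cons_val_one, and_assoc]
  constructor
  · rintro (hbot | ⟨hbc, hdiag⟩)
    · exact .inl hbot
    · exact .inr ⟨b, c, hbc, by simpa using hdiag⟩
  · rintro (hbot | ⟨x, y, hxy, ⟨ha, rfl, rfl, hd⟩ | ⟨ha, rfl, rfl, hd⟩ | ⟨ha, rfl, rfl, hd⟩⟩)
    · exact .inl hbot
    all_goals exact .inr ⟨hxy, by simp [*]⟩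
end

section
/- The monoid M₂(ℝ̄) of all 2 × 2 tropical matrices is regular: for every A ∈ M₂(ℝ̄) there exists B ∈ M₂(ℝ̄) such that A ⊗ B ⊗ A = A. -/
open scoped Classical ENNReal

/-!
If the tropical permanent `r = max (a + d) (b + c)` of `A = [[a, b], [c, d]]` is finite, the
tropical adjugate `adj A = [[d, b], [c, a]]` satisfies `A ⊗ adj A ⊗ A = r ⊗ A`, an identity that
follows from distributivity, associativity, commutativity and idempotency of `max` alone; so
`B = (-r) ⊗ adj A` works. If `r = -∞`, no two finite entries of `A` lie in different rows and
different columns. Then `B = -Aᵀ` works: each term `A i k - A l k + A l j` of `(A ⊗ B ⊗ A) i j`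
either cancels down to at most `A i j` or is `-∞`, and the term `k = j`, `l = i` equals `A i j`.
-/

def tNeg : Rb → Rb := WithBot.map Neg.neg

lemma add_tNeg_le_zero (x : Rb) : x + tNeg x ≤ 0 := by
  induction x using WithBot.recBotCoe with
  | bot => simp
  | coe x => simp [tNeg, ← WithBot.coe_add]

lemma add_tNeg_add_self (x : Rb) : x + tNeg x + x = x := by
  induction x using WithBot.recBotCoe with
  | bot => simp
  | coe x => simp [tNeg, ← WithBot.coe_add]

lemma finset_sup_add {ι : Type*} (s : Finset ι) (f : ι → Rb) (c : Rb) :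
    s.sup f + c = s.sup fun k => f k + c :=
  Finset.apply_sup_eq_sup_comp_of_linearOrder (· + c) (fun _ _ h => add_le_add_left h c)
    (WithBot.bot_add c)

lemma add_finset_sup {ι : Type*} (s : Finset ι) (f : ι → Rb) (c : Rb) :
    c + s.sup f = s.sup fun k => c + f k :=
  Finset.apply_sup_eq_sup_comp_of_linearOrder (c + ·) (fun _ _ h => add_le_add_right h c)
    (WithBot.add_bot c)

section tMul

variable {n : ℕ} (A B C : Fin n → Fin n → Rb)

lemma tMul_const_add_left (c : Rb) :
    tMul (fun i k => c + A i k) B = fun i j => c + tMul A B i j := by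
  funext i j
  simp only [tMul, add_finset_sup, add_assoc]

lemma tMul_const_add_right (c : Rb) :
    tMul A (fun k j => c + B k j) = fun i j => c + tMul A B i j := by
  funext i j
  simp only [tMul, add_finset_sup, add_left_comm c]

lemma le_tMul_tMul_apply (i j k l : Fin n) : A i k + B k l + C l j ≤ tMul (tMul A B) C i j :=
  Finset.le_sup_of_le (Finset.mem_univ l)
    (add_le_add_left (Finset.le_sup (f := fun k => A i k + B k l) (Finset.mem_univ k)) _)

lemma tMul_tMul_apply_le {i j : Fin n} {x : Rb} (h : ∀ k l, A i k + B k l + C l j ≤ x) :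
    tMul (tMul A B) C i j ≤ x := by
  refine Finset.sup_le fun l _ => ?_
  simp only [tMul, finset_sup_add]
  exact Finset.sup_le fun k _ => h k l

theorem tMul_tMul_tNeg_transpose (hA : ∀ i j k l, i ≠ l → k ≠ j → A i k + A l j = ⊥) :
    tMul (tMul A fun k l => tNeg (A l k)) A = A := by
  funext i j
  refine le_antisymm (tMul_tMul_apply_le _ _ _ fun k l => ?_) ?_
  · by_cases hil : i = l
    · subst hil
      calc A i k + tNeg (A i k) + A i j ≤ 0 + A i j := add_le_add_left (add_tNeg_le_zero _) _
        _ = A i j := zero_add _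
    by_cases hkj : k = j
    · subst hkj
      calc A i k + tNeg (A l k) + A l k = A i k + (A l k + tNeg (A l k)) := by abel
        _ ≤ A i k + 0 := add_le_add_right (add_tNeg_le_zero _) _
        _ = A i k := add_zero _
    calc A i k + tNeg (A l k) + A l j = (A i k + A l j) + tNeg (A l k) := by abel
      _ = ⊥ := by rw [hA i j k l hil hkj, WithBot.bot_add]
      _ ≤ A i j := bot_le
  · conv_lhs => rw [← add_tNeg_add_self (A i j)]
    exact le_tMul_tMul_apply A (fun k l => tNeg (A l k)) A i j j i

end tMul

def tPerm (A : Mat2) : Rb := max (A 0 0 + A 1 1) (A 0 1 + A 1 0)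

def tAdj (A : Mat2) : Mat2 := ![![A 1 1, A 0 1], ![A 1 0, A 0 0]]

lemma tMul_apply_two (A B : Mat2) (i j : Fin 2) :
    tMul A B i j = max (A i 0 + B 0 j) (A i 1 + B 1 j) := by
  simp [tMul, Fin.univ_succ]

theorem tMul_tMul_tAdj (A : Mat2) : tMul (tMul A (tAdj A)) A = fun i j => tPerm A + A i j := by
  funext i j
  revert i j
  simp only [Fin.forall_fin_two, tMul_apply_two, tAdj, tPerm, Matrix.cons_val_zero,
    Matrix.cons_val_one, ← max_add_add_right]
  generalize A 0 0 = a, A 0 1 = b, A 1 0 = c, A 1 1 = d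
  refine ⟨⟨?_, ?_⟩, ?_, ?_⟩ <;> ac_rfl

lemma add_eq_bot_of_tPerm_eq_bot {A : Mat2} (h : tPerm A = ⊥) (i j k l : Fin 2) (hil : i ≠ l)
    (hkj : k ≠ j) : A i k + A l j = ⊥ := by
  obtain ⟨hd, ha⟩ := max_eq_bot.mp h
  fin_cases i <;> fin_cases j <;> fin_cases k <;> fin_cases l <;> simp_all [add_comm]

/-- the monoid `M₂(ℝ̄)` of `2 × 2` tropical matrices is (von Neumann)
regular: every `A` satisfies `A ⊗ B ⊗ A = A` for some `B`. -/
theorem mat2_regular (A : Mat2) : ∃ B : Mat2, tMul (tMul A B) A = A := by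
  cases h : tPerm A using WithBot.recBotCoe with
  | bot => exact ⟨_, tMul_tMul_tNeg_transpose A (add_eq_bot_of_tPerm_eq_bot h)⟩
  | coe r =>
    refine ⟨fun k l => ↑(-r) + tAdj A k l, ?_⟩
    rw [tMul_const_add_right, tMul_const_add_left, tMul_tMul_tAdj, h]
    funext i j
    rw [← add_assoc, ← WithBot.coe_add, neg_add_cancel, WithBot.coe_zero, zero_add]
end

section
/- Let M and N be closed convex subsets of ℝ̂. Then there exists an idempotent E ∈ M₂(ℝ̄) with PC(E) = M and PR(E) = N if and only if one of the following holds: (i) M = {x} and N = {y} are singletons with {x, y} ≠ {−∞, +∞}; (ii) M = −N := {−x : x ∈ N} (where −(−∞) = +∞ and −(+∞) = −∞) and N is not a singleton. -/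
open scoped Classical ENNReal

-- basics
lemma sup_univ_two (f : Fin 2 → Rb) : Finset.univ.sup f = f 0 ⊔ f 1 := by
  rw [show (Finset.univ : Finset (Fin 2)) = {0, 1} from rfl]
  simp [Finset.sup_insert]

lemma rb_cases (x : Rb) : x = ⊥ ∨ ∃ r : ℝ, x = (r : Rb) := by
  cases x with
  | none => exact Or.inl rfl
  | some r => exact Or.inr ⟨r, rfl⟩

@[simp] lemma toE_bot : toE ⊥ = ⊥ := rfl
@[simp] lemma toE_coe (r : ℝ) : toE (r : Rb) = (r : EReal) := rfl
lemma toE_ne_top (x : Rb) : toE x ≠ ⊤ := by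
  rcases rb_cases x with h | ⟨r, h⟩ <;> simp [h]
@[simp] lemma toE_eq_bot {x : Rb} : toE x = ⊥ ↔ x = ⊥ := by
  rcases rb_cases x with h | ⟨r, h⟩ <;> simp [h]
lemma toE_sup (x y : Rb) : toE (x ⊔ y) = toE x ⊔ toE y := by
  rcases rb_cases x with h | ⟨r, h⟩ <;> rcases rb_cases y with h' | ⟨s, h'⟩ <;>
    simp [h, h']
  exact_mod_cast rfl
lemma toE_le {x y : Rb} : toE x ≤ toE y ↔ x ≤ y := by
  rcases rb_cases x with h | ⟨r, h⟩ <;> rcases rb_cases y with h' | ⟨s, h'⟩ <;>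
    simp [h, h']

-- EReal sub lemmas
lemma Esub_le (x y z w : EReal) : (x ⊔ y) - (z ⊔ w) ≤ (x - z) ⊔ (y - w) := by
  rcases le_total x y with h | h
  · rw [sup_eq_right.mpr h]
    exact le_sup_of_le_right (EReal.sub_le_sub le_rfl le_sup_right)
  · rw [sup_eq_left.mpr h]
    exact le_sup_of_le_left (EReal.sub_le_sub le_rfl le_sup_left)

lemma Esub_ge (x y z w : EReal) : (x - z) ⊓ (y - w) ≤ (x ⊔ y) - (z ⊔ w) := by
  rcases le_total z w with h | h
  · rw [sup_eq_right.mpr h]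
    exact inf_le_of_right_le (EReal.sub_le_sub le_sup_right le_rfl)
  · rw [sup_eq_left.mpr h]
    exact inf_le_of_left_le (EReal.sub_le_sub le_sup_left le_rfl)

-- translation invariance
lemma Etrans (l : ℝ) (a b : Rb) :
    toE ((l : Rb) + a) - toE ((l : Rb) + b) = toE a - toE b := by
  rcases rb_cases a with h | ⟨r, h⟩ <;> rcases rb_cases b with h' | ⟨s, h'⟩ <;>
      subst h <;> subst h'
  · simp
  · rw [WithBot.add_bot, toE_bot, EReal.bot_sub, EReal.bot_sub]
  · have h1 : (l : Rb) + (r : Rb) = ((l + r : ℝ) : Rb) := by exact_mod_cast rfl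
    rw [WithBot.add_bot, h1, toE_bot, toE_coe, toE_coe]
    rfl
  · have h1 : (l : Rb) + (r : Rb) = ((l + r : ℝ) : Rb) := by exact_mod_cast rfl
    have h2 : (l : Rb) + (s : Rb) = ((l + s : ℝ) : Rb) := by exact_mod_cast rfl
    rw [h1, h2, toE_coe, toE_coe, toE_coe, toE_coe]
    rw [← EReal.coe_sub, ← EReal.coe_sub]
    norm_num

-- vectors
lemma vec_eq_zero_iff (v : Fin 2 → Rb) : v = zeroVec ↔ v 0 = ⊥ ∧ v 1 = ⊥ := by
  constructor
  · intro h; rw [h]; exact ⟨rfl, rfl⟩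
  · rintro ⟨h0, h1⟩; funext i; fin_cases i
    · exact h0
    · exact h1

lemma mem_ColSpace_iff {A : Mat2} {v : Fin 2 → Rb} :
    v ∈ ColSpace A ↔ ∃ c : Fin 2 → Rb, ∀ i, v i = (c 0 + A i 0) ⊔ (c 1 + A i 1) := by
  unfold ColSpace
  simp only [Set.mem_setOf_eq, sup_univ_two]

def col (A : Mat2) (j : Fin 2) : Fin 2 → Rb := fun i => A i j

lemma col_mem_ColSpace (A : Mat2) (j : Fin 2) : col A j ∈ ColSpace A := by
  rw [mem_ColSpace_iff]
  refine ⟨fun k => if k = j then 0 else ⊥, fun i => ?_⟩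
  fin_cases j <;> simp [col]

-- scaling
lemma projPt_smul (l : ℝ) (v : Fin 2 → Rb) :
    projPt (fun i => (l : Rb) + v i) = projPt v := Etrans l (v 1) (v 0)

lemma projPt_col (A : Mat2) (j : Fin 2) :
    projPt (col A j) = toE (A 1 j) - toE (A 0 j) := rfl

-- PC singleton lemma (second column zero)
lemma PC_single0 (A : Mat2) (h01 : A 0 1 = ⊥) (h11 : A 1 1 = ⊥)
    (hnz : ¬(A 0 0 = ⊥ ∧ A 1 0 = ⊥)) :
    PC A = {projPt (col A 0)} := by
  ext z
  constructor
  · rintro ⟨v, hvC, hvnz, rfl⟩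
    obtain ⟨c, hc⟩ := mem_ColSpace_iff.mp hvC
    have hv : ∀ i, v i = c 0 + A i 0 := by
      intro i; rw [hc i]
      fin_cases i <;> simp [h01, h11]
    rcases rb_cases (c 0) with h | ⟨l, h⟩
    · exfalso; apply hvnz
      rw [vec_eq_zero_iff]
      constructor <;> simp [hv, h]
    · have hveq : v = fun i => (l : Rb) + col A 0 i := by
        funext i; rw [hv i, h]; rfl
      rw [hveq, projPt_smul]
      rfl
  · rintro rfl
    refine ⟨col A 0, col_mem_ColSpace A 0, fun h => hnz ((vec_eq_zero_iff _).mp h), rfl⟩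

-- swap columns
lemma ColSpace_swap (A : Mat2) : ColSpace (fun i j => A i (j + 1)) = ColSpace A := by
  ext v
  rw [mem_ColSpace_iff, mem_ColSpace_iff]
  constructor
  · rintro ⟨c, hc⟩
    exact ⟨fun k => c (k + 1), fun i => by rw [hc i, sup_comm]; rfl⟩
  · rintro ⟨c, hc⟩
    exact ⟨fun k => c (k + 1), fun i => by rw [hc i, sup_comm]; rfl⟩

lemma PC_swap (A : Mat2) : PC (fun i j => A i (j + 1)) = PC A := by
  unfold PC; rw [ColSpace_swap]

lemma col_swap0 (A : Mat2) : col (fun i j => A i (j + 1)) 0 = col A 1 := rfl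
lemma col_swap1 (A : Mat2) : col (fun i j => A i (j + 1)) 1 = col A 0 := rfl

lemma PC_single1 (A : Mat2) (h00 : A 0 0 = ⊥) (h10 : A 1 0 = ⊥)
    (hnz : ¬(A 0 1 = ⊥ ∧ A 1 1 = ⊥)) :
    PC A = {projPt (col A 1)} := by
  rw [← PC_swap A]
  have e1 : (1 + 1 : Fin 2) = 0 := by decide
  have e0 : (0 + 1 : Fin 2) = 1 := by decide
  have h01' : (fun i j => A i (j + 1)) 0 1 = ⊥ := by show A 0 (1 + 1) = ⊥; rw [e1]; exact h00
  have h11' : (fun i j => A i (j + 1)) 1 1 = ⊥ := by show A 1 (1 + 1) = ⊥; rw [e1]; exact h10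
  have hnz' : ¬((fun i j => A i (j + 1)) 0 0 = ⊥ ∧ (fun i j => A i (j + 1)) 1 0 = ⊥) := by
    show ¬(A 0 (0 + 1) = ⊥ ∧ A 1 (0 + 1) = ⊥); rw [e0]; exact hnz
  rw [PC_single0 (fun i j => A i (j + 1)) h01' h11' hnz', col_swap0]

lemma PC_empty (A : Mat2) (h : ∀ i j, A i j = ⊥) : PC A = ∅ := by
  ext z
  simp only [Set.mem_empty_iff_false, iff_false]
  rintro ⟨v, hvC, hvnz, rfl⟩
  obtain ⟨c, hc⟩ := mem_ColSpace_iff.mp hvC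
  apply hvnz
  funext i
  rw [hc i, h i 0, h i 1]
  simp [zeroVec]

-- subset direction of the interval lemma
lemma PC_subset_Icc (A : Mat2) :
    PC A ⊆ Set.Icc (projPt (col A 0) ⊓ projPt (col A 1))
      (projPt (col A 0) ⊔ projPt (col A 1)) := by
  rintro z ⟨v, hvC, hvnz, rfl⟩
  obtain ⟨c, hc⟩ := mem_ColSpace_iff.mp hvC
  rcases rb_cases (c 0) with h0 | ⟨l, h0⟩ <;> rcases rb_cases (c 1) with h1 | ⟨m, h1⟩
  · exfalso; apply hvnz; funext i; rw [hc i, h0, h1]; simp [zeroVec]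
  · have hveq : v = fun i => (m : Rb) + col A 1 i := by
      funext i; rw [hc i, h0, h1]; simp; rfl
    rw [hveq, projPt_smul]
    exact ⟨inf_le_right, le_sup_right⟩
  · have hveq : v = fun i => (l : Rb) + col A 0 i := by
      funext i; rw [hc i, h0, h1]; simp; rfl
    rw [hveq, projPt_smul]
    exact ⟨inf_le_left, le_sup_left⟩
  · have e0 : toE ((l : Rb) + A 1 0) - toE ((l : Rb) + A 0 0) = projPt (col A 0) :=
      Etrans l (A 1 0) (A 0 0)
    have e1 : toE ((m : Rb) + A 1 1) - toE ((m : Rb) + A 0 1) = projPt (col A 1) :=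
      Etrans m (A 1 1) (A 0 1)
    have hpv : projPt v =
        (toE ((l : Rb) + A 1 0) ⊔ toE ((m : Rb) + A 1 1)) -
          (toE ((l : Rb) + A 0 0) ⊔ toE ((m : Rb) + A 0 1)) := by
      rw [projPt, hc 0, hc 1, h0, h1, toE_sup, toE_sup]
    constructor
    · rw [hpv, ← e0, ← e1]
      exact Esub_ge _ _ _ _
    · rw [hpv, ← e0, ← e1]
      exact Esub_le _ _ _ _

lemma Icc_subset_PC (A : Mat2)
    (hnz0 : ¬(A 0 0 = ⊥ ∧ A 1 0 = ⊥)) (hnz1 : ¬(A 0 1 = ⊥ ∧ A 1 1 = ⊥)) :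
    Set.Icc (projPt (col A 0)) (projPt (col A 1)) ⊆ PC A := by
  intro z hz
  by_cases hz0 : z = projPt (col A 0)
  · exact ⟨col A 0, col_mem_ColSpace A 0,
      fun h => hnz0 ((vec_eq_zero_iff _).mp h), hz0.symm⟩
  by_cases hz1 : z = projPt (col A 1)
  · exact ⟨col A 1, col_mem_ColSpace A 1,
      fun h => hnz1 ((vec_eq_zero_iff _).mp h), hz1.symm⟩
  have hlt0 : projPt (col A 0) < z := lt_of_le_of_ne hz.1 (Ne.symm hz0)
  have hlt1 : z < projPt (col A 1) := lt_of_le_of_ne hz.2 hz1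
  -- A 0 0 is real
  obtain ⟨u0, hu0⟩ : ∃ r : ℝ, A 0 0 = (r : Rb) := by
    rcases rb_cases (A 0 0) with h | h
    · exfalso
      rcases rb_cases (A 1 0) with h' | ⟨r, h'⟩
      · exact hnz0 ⟨h, h'⟩
      · have : projPt (col A 0) = ⊤ := by
          rw [projPt_col, h, h', toE_bot, toE_coe]; rfl
        rw [this] at hlt0
        exact not_top_lt hlt0
    · exact h
  -- A 1 1 is real
  obtain ⟨w1, hw1⟩ : ∃ r : ℝ, A 1 1 = (r : Rb) := by
    rcases rb_cases (A 1 1) with h | h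
    · exfalso
      rcases rb_cases (A 0 1) with h' | ⟨r, h'⟩
      · exact hnz1 ⟨h', h⟩
      · have : projPt (col A 1) = ⊥ := by
          rw [projPt_col, h, h', toE_bot, toE_coe, EReal.bot_sub]
        rw [this] at hlt1
        exact not_lt_bot hlt1
    · exact h
  -- z is real
  obtain ⟨zr, hzr⟩ : ∃ r : ℝ, z = (r : EReal) := by
    induction z using EReal.rec with
    | bot => exact absurd hlt0 (not_lt_bot)
    | coe r => exact ⟨r, rfl⟩
    | top => exact absurd hlt1 (not_top_lt)
  subst hzr
  -- the witness vector
  set c : Fin 2 → Rb := ![((-u0 : ℝ) : Rb), ((zr - w1 : ℝ) : Rb)] with hcdef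
  set v : Fin 2 → Rb := fun i => (c 0 + A i 0) ⊔ (c 1 + A i 1) with hvdef
  have hv0 : v 0 = ((0 : ℝ) : Rb) := by
    have h1 : c 0 + A 0 0 = ((0 : ℝ) : Rb) := by
      rw [hu0]; show ((-u0 : ℝ) : Rb) + (u0 : Rb) = _; exact_mod_cast by ring
    have h2 : c 1 + A 0 1 ≤ ((0 : ℝ) : Rb) := by
      rcases rb_cases (A 0 1) with h | ⟨w0, h⟩
      · rw [h]; simp
      · rw [h]
        have hp1 : projPt (col A 1) = ((w1 - w0 : ℝ) : EReal) := by
          rw [projPt_col, h, hw1, toE_coe, toE_coe]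
          exact_mod_cast rfl
        rw [hp1] at hlt1
        have : zr < w1 - w0 := by exact_mod_cast hlt1
        show ((zr - w1 : ℝ) : Rb) + (w0 : Rb) ≤ _
        exact_mod_cast by linarith
    show (c 0 + A 0 0) ⊔ (c 1 + A 0 1) = _
    rw [h1, sup_eq_left.mpr (h1 ▸ h2)]
  have hv1 : v 1 = (zr : Rb) := by
    have h2 : c 1 + A 1 1 = (zr : Rb) := by
      rw [hw1]; show ((zr - w1 : ℝ) : Rb) + (w1 : Rb) = _; exact_mod_cast by ring
    have h1 : c 0 + A 1 0 ≤ (zr : Rb) := by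
      rcases rb_cases (A 1 0) with h | ⟨u1, h⟩
      · rw [h]; simp
      · rw [h]
        have hp0 : projPt (col A 0) = ((u1 - u0 : ℝ) : EReal) := by
          rw [projPt_col, h, hu0, toE_coe, toE_coe]
          exact_mod_cast rfl
        rw [hp0] at hlt0
        have : u1 - u0 < zr := by exact_mod_cast hlt0
        show ((-u0 : ℝ) : Rb) + (u1 : Rb) ≤ _
        exact_mod_cast by linarith
    show (c 0 + A 1 0) ⊔ (c 1 + A 1 1) = _
    rw [h2, sup_eq_right.mpr (h2 ▸ h1)]
  refine ⟨v, mem_ColSpace_iff.mpr ⟨c, fun i => rfl⟩, ?_, ?_⟩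
  · intro h
    have := congrFun h 0
    rw [hv0] at this
    exact WithBot.coe_ne_bot this
  · rw [projPt, hv0, hv1, toE_coe, toE_coe]
    exact_mod_cast by ring

lemma PC_Icc (A : Mat2)
    (hnz0 : ¬(A 0 0 = ⊥ ∧ A 1 0 = ⊥)) (hnz1 : ¬(A 0 1 = ⊥ ∧ A 1 1 = ⊥)) :
    PC A = Set.Icc (projPt (col A 0) ⊓ projPt (col A 1))
      (projPt (col A 0) ⊔ projPt (col A 1)) := by
  apply Set.Subset.antisymm (PC_subset_Icc A)
  rcases le_total (projPt (col A 0)) (projPt (col A 1)) with h | h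
  · rw [inf_eq_left.mpr h, sup_eq_right.mpr h]
    exact Icc_subset_PC A hnz0 hnz1
  · rw [inf_eq_right.mpr h, sup_eq_left.mpr h]
    rw [← PC_swap A]
    have key := Icc_subset_PC (fun i j => A i (j + 1)) ?h0 ?h1
    case h0 =>
      show ¬(A 0 (0 + 1) = ⊥ ∧ A 1 (0 + 1) = ⊥)
      rw [show (0 + 1 : Fin 2) = 1 by decide]; exact hnz1
    case h1 =>
      show ¬(A 0 (1 + 1) = ⊥ ∧ A 1 (1 + 1) = ⊥)
      rw [show (1 + 1 : Fin 2) = 0 by decide]; exact hnz0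
    rw [col_swap0, col_swap1] at key
    exact key

-- row space = column space of transpose
lemma RowSpace_eq_ColSpace_transpose (A : Mat2) :
    RowSpace A = ColSpace (fun i j => A j i) := rfl

lemma PR_eq_PC_transpose (A : Mat2) : PR A = PC (fun i j => A j i) := by
  unfold PR PC
  rw [RowSpace_eq_ColSpace_transpose]

-- explicit matrices
lemma transpose_explicit (a b c d : Rb) :
    (fun i j => (![![a, b], ![c, d]] : Mat2) j i) = ![![a, c], ![b, d]] := by
  funext i j
  fin_cases i <;> fin_cases j <;> rfl

lemma PR_explicit (a b c d : Rb) :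
    PR ![![a, b], ![c, d]] = PC ![![a, c], ![b, d]] := by
  rw [PR_eq_PC_transpose, transpose_explicit]

lemma col0_explicit (a b c d : Rb) : col ![![a, b], ![c, d]] 0 = ![a, c] := by
  funext i; fin_cases i <;> rfl
lemma col1_explicit (a b c d : Rb) : col ![![a, b], ![c, d]] 1 = ![b, d] := by
  funext i; fin_cases i <;> rfl
lemma projPt_pair (x y : Rb) : projPt ![x, y] = toE y - toE x := rfl

lemma tMul_apply (A B : Mat2) (i j : Fin 2) :
    tMul A B i j = (A i 0 + B 0 j) ⊔ (A i 1 + B 1 j) := by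
  unfold tMul; rw [sup_univ_two]

-- EReal sub value facts
@[simp] lemma coe_sub_bot' (r : ℝ) : (r : EReal) - ⊥ = ⊤ := rfl
@[simp] lemma bot_sub_bot' : (⊥ : EReal) - ⊥ = ⊥ := EReal.bot_sub _
@[simp] lemma bot_sub_coe' (r : ℝ) : (⊥ : EReal) - (r : EReal) = ⊥ := EReal.bot_sub _
lemma coe_sub_coe' (r s : ℝ) : (r : EReal) - (s : EReal) = ((r - s : ℝ) : EReal) := by
  exact_mod_cast rfl

-- negation image of Icc
lemma neg_image_Icc (x y : EReal) :
    (fun z : EReal => -z) '' Set.Icc x y = Set.Icc (-y) (-x) := by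
  ext z
  constructor
  · rintro ⟨w, ⟨h1, h2⟩, rfl⟩
    exact ⟨EReal.neg_le_neg_iff.mpr h2, EReal.neg_le_neg_iff.mpr h1⟩
  · rintro ⟨h1, h2⟩
    exact ⟨-z, ⟨EReal.le_neg_of_le_neg h2, EReal.neg_le_of_neg_le h1⟩, neg_neg z⟩

lemma neg_image_singleton (x : EReal) :
    (fun z : EReal => -z) '' {x} = {-x} := by
  simp

-- idempotency for explicit matrices
lemma idem_of (a b c d : Rb) (h00 : (a + a) ⊔ (b + c) = a) (h01 : (a + b) ⊔ (b + d) = b)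
    (h10 : (c + a) ⊔ (d + c) = c) (h11 : (c + b) ⊔ (d + d) = d) :
    tMul ![![a, b], ![c, d]] ![![a, b], ![c, d]] = ![![a, b], ![c, d]] := by
  funext i j
  rw [tMul_apply]
  fin_cases i <;> fin_cases j <;> simp only [Matrix.cons_val', Matrix.cons_val_zero,
    Matrix.cons_val_one, Matrix.head_cons, Matrix.empty_val', Matrix.cons_val_fin_one,
    Matrix.head_fin_const]
  exacts [h00, h01, h10, h11]

-- rank one idempotents
lemma sup_eq_zero_cases {a b : Rb} (h : a ⊔ b = 0) : a = 0 ∨ b = 0 := by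
  rcases le_total a b with h' | h'
  · right; rw [sup_eq_right.mpr h'] at h; exact h
  · left; rw [sup_eq_left.mpr h'] at h; exact h

lemma rank1_idem (u v : Fin 2 → Rb) (h : (v 0 + u 0) ⊔ (v 1 + u 1) = 0) :
    tMul (fun i j => u i + v j) (fun i j => u i + v j) = fun i j => u i + v j := by
  funext i j
  rw [tMul_apply]
  have rearr : ∀ a b : Rb, u i + a + (b + v j) = u i + (a + b) + v j := by
    intro a b; rw [add_assoc, add_assoc, add_assoc]
  have this2 : (u i + v 0 + (u 0 + v j)) ⊔ (u i + v 1 + (u 1 + v j)) =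
      u i + ((v 0 + u 0) ⊔ (v 1 + u 1)) + v j := by
    rw [rearr, rearr]
    rcases le_total (v 0 + u 0) (v 1 + u 1) with h' | h'
    · rw [sup_eq_right.mpr h', sup_eq_right.mpr (add_le_add (add_le_add le_rfl h') le_rfl)]
    · rw [sup_eq_left.mpr h', sup_eq_left.mpr (add_le_add (add_le_add le_rfl h') le_rfl)]
  rw [this2, h, add_zero]

lemma rank1_PC (u v : Fin 2 → Rb) (h : (v 0 + u 0) ⊔ (v 1 + u 1) = 0) :
    PC (fun i j => u i + v j) = {projPt u} := by
  rcases rb_cases (v 0) with h0 | ⟨l, h0⟩ <;> rcases rb_cases (v 1) with h1 | ⟨m, h1⟩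
  · exfalso
    rw [h0, h1] at h
    simp at h
  · -- v 0 = ⊥, v 1 = m
    have hu1 : m + u 1 = 0 := by
      rw [h0, h1] at h; simpa using h
    have hE : PC (fun i j => u i + v j) = {projPt (col (fun i j => u i + v j) 1)} := by
      apply PC_single1
      · show u 0 + v 0 = ⊥; rw [h0]; simp
      · show u 1 + v 0 = ⊥; rw [h0]; simp
      · rintro ⟨-, hb⟩
        have : u 1 + v 1 = ⊥ := hb
        rw [h1, add_comm, hu1] at this
        exact WithBot.bot_ne_zero this.symm
    rw [hE]
    congr 1
    have : col (fun i j => u i + v j) 1 = fun i => (m : Rb) + u i := by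
      funext i; show u i + v 1 = _; rw [h1, add_comm]
    rw [this, projPt_smul]
  · -- v 0 = l, v 1 = ⊥
    have hu0 : l + u 0 = 0 := by
      rw [h0, h1] at h; simpa using h
    have hE : PC (fun i j => u i + v j) = {projPt (col (fun i j => u i + v j) 0)} := by
      apply PC_single0
      · show u 0 + v 1 = ⊥; rw [h1]; simp
      · show u 1 + v 1 = ⊥; rw [h1]; simp
      · rintro ⟨ha, -⟩
        have : u 0 + v 0 = ⊥ := ha
        rw [h0, add_comm, hu0] at this
        exact WithBot.bot_ne_zero this.symm
    rw [hE]
    congr 1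
    have : col (fun i j => u i + v j) 0 = fun i => (l : Rb) + u i := by
      funext i; show u i + v 0 = _; rw [h0, add_comm]
    rw [this, projPt_smul]
  · -- both real
    have hu : u 0 ≠ ⊥ ∨ u 1 ≠ ⊥ := by
      rcases sup_eq_zero_cases h with h' | h'
      · left; intro hb; rw [hb, h0] at h'; simp at h'
      · right; intro hb; rw [hb, h1] at h'; simp at h'
    have hproj : ∀ j : Fin 2, projPt (col (fun i j => u i + v j) j) = projPt u := by
      intro j
      have hvj : ∃ r : ℝ, v j = (r : Rb) := by
        fin_cases j
        exacts [⟨l, h0⟩, ⟨m, h1⟩]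
      obtain ⟨r, hr⟩ := hvj
      have : col (fun i j => u i + v j) j = fun i => (r : Rb) + u i := by
        funext i; show u i + v j = _; rw [hr, add_comm]
      rw [this, projPt_smul]
    have hnz : ∀ j : Fin 2, ¬((fun i j => u i + v j) 0 j = ⊥ ∧ (fun i j => u i + v j) 1 j = ⊥) := by
      intro j
      rintro ⟨ha, hb⟩
      have hvj : ∃ r : ℝ, v j = (r : Rb) := by
        fin_cases j
        exacts [⟨l, h0⟩, ⟨m, h1⟩]
      obtain ⟨r, hr⟩ := hvj
      rcases hu with h' | h'
      · apply h'
        have : u 0 + v j = ⊥ := ha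
        rw [hr] at this
        exact (WithBot.add_eq_bot.mp this).resolve_right (by simp)
      · apply h'
        have : u 1 + v j = ⊥ := hb
        rw [hr] at this
        exact (WithBot.add_eq_bot.mp this).resolve_right (by simp)
    rw [PC_Icc _ (hnz 0) (hnz 1), hproj 0, hproj 1]
    simp

lemma rank1_PR (u v : Fin 2 → Rb) (h : (v 0 + u 0) ⊔ (v 1 + u 1) = 0) :
    PR (fun i j => u i + v j) = {projPt v} := by
  rw [PR_eq_PC_transpose]
  have : (fun i j => (fun i j => u i + v j) j i) = fun i j => v i + u j := by
    funext i j; exact add_comm _ _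
  rw [this]
  apply rank1_PC
  rw [add_comm (u 0) (v 0), add_comm (u 1) (v 1)]
  exact h

-- entry evaluation for explicit matrices
lemma entry00 (a b c d : Rb) : (![![a, b], ![c, d]] : Mat2) 0 0 = a := rfl
lemma entry01 (a b c d : Rb) : (![![a, b], ![c, d]] : Mat2) 0 1 = b := rfl
lemma entry10 (a b c d : Rb) : (![![a, b], ![c, d]] : Mat2) 1 0 = c := rfl
lemma entry11 (a b c d : Rb) : (![![a, b], ![c, d]] : Mat2) 1 1 = d := rfl

lemma toE_le_neg {b c : Rb} (h : b + c ≤ 0) : toE c ≤ -toE b := by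
  rcases rb_cases b with hb | ⟨r, hb⟩
  · rw [hb]; simp
  · rcases rb_cases c with hc | ⟨s, hc⟩
    · rw [hc]; simp
    · rw [hb, hc] at h ⊢
      have : r + s ≤ 0 := by exact_mod_cast h
      rw [toE_coe, toE_coe, ← EReal.coe_neg]
      exact_mod_cast by linarith

lemma Ediag_idem (b c : Rb) (h : b + c ≤ 0) :
    tMul ![![0, b], ![c, 0]] ![![0, b], ![c, 0]] = ![![0, b], ![c, 0]] := by
  apply idem_of
  · rw [add_zero, sup_eq_left.mpr h]
  · rw [zero_add, add_zero, sup_idem]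
  · rw [add_zero, zero_add, sup_idem]
  · rw [add_zero, add_comm c b, sup_eq_right.mpr h]

lemma Ediag_PC (b c : Rb) (h : b + c ≤ 0) :
    PC ![![0, b], ![c, 0]] = Set.Icc (toE c) (-toE b) := by
  rw [PC_Icc]
  · rw [col0_explicit, col1_explicit, projPt_pair, projPt_pair]
    have h0 : toE (0 : Rb) = 0 := rfl
    rw [h0]
    have e1 : toE c - 0 = toE c := by simp
    have e2 : (0 : EReal) - toE b = -toE b := by simp
    rw [e1, e2, inf_eq_left.mpr (toE_le_neg h), sup_eq_right.mpr (toE_le_neg h)]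
  · rw [entry00, entry10]
    rintro ⟨h', -⟩
    exact (by simp : (0 : Rb) ≠ ⊥) h'
  · rw [entry01, entry11]
    rintro ⟨-, h'⟩
    exact (by simp : (0 : Rb) ≠ ⊥) h'

lemma Ediag_PR (b c : Rb) (h : b + c ≤ 0) :
    PR ![![0, b], ![c, 0]] = Set.Icc (toE b) (-toE c) := by
  rw [PR_explicit]
  exact Ediag_PC c b (by rwa [add_comm])

-- explicit master lemmas
lemma PC_explicit_Icc (a b c d : Rb) (hnz0 : ¬(a = ⊥ ∧ c = ⊥)) (hnz1 : ¬(b = ⊥ ∧ d = ⊥)) :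
    PC ![![a, b], ![c, d]] =
      Set.Icc ((toE c - toE a) ⊓ (toE d - toE b)) ((toE c - toE a) ⊔ (toE d - toE b)) := by
  rw [PC_Icc ![![a, b], ![c, d]] (by rw [entry00, entry10]; exact hnz0)
    (by rw [entry01, entry11]; exact hnz1), col0_explicit, col1_explicit,
    projPt_pair, projPt_pair]

lemma PC_explicit_single0 (a c : Rb) (hnz : ¬(a = ⊥ ∧ c = ⊥)) :
    PC ![![a, ⊥], ![c, ⊥]] = {toE c - toE a} := by
  rw [PC_single0 ![![a, ⊥], ![c, ⊥]] (entry01 a ⊥ c ⊥) (entry11 a ⊥ c ⊥)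
    (by rw [entry00, entry10]; exact hnz), col0_explicit, projPt_pair]

lemma PC_explicit_single1 (b d : Rb) (hnz : ¬(b = ⊥ ∧ d = ⊥)) :
    PC ![![(⊥ : Rb), b], ![⊥, d]] = {toE d - toE b} := by
  rw [PC_single1 ![![(⊥ : Rb), b], ![⊥, d]] (entry00 ⊥ b ⊥ d) (entry10 ⊥ b ⊥ d)
    (by rw [entry01, entry11]; exact hnz), col1_explicit, projPt_pair]

lemma PC_explicit_empty : PC ![![(⊥ : Rb), ⊥], ![⊥, ⊥]] = ∅ := by
  apply PC_empty
  intro i j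
  fin_cases i <;> fin_cases j <;> rfl

lemma mat_ext (E : Mat2) : E = ![![E 0 0, E 0 1], ![E 1 0, E 1 1]] := by
  funext i j
  fin_cases i <;> fin_cases j <;> rfl

-- pair and singleton helpers
lemma pair_ne_left (r : ℝ) (y : EReal) : ({(r : EReal), y} : Set EReal) ≠ {⊥, ⊤} := by
  intro h
  have : (r : EReal) ∈ ({⊥, ⊤} : Set EReal) := h ▸ Set.mem_insert _ _
  rcases this with h' | h'
  · exact EReal.coe_ne_bot r h'
  · exact EReal.coe_ne_top r h'

lemma pair_ne_right (x : EReal) (r : ℝ) : ({x, (r : EReal)} : Set EReal) ≠ {⊥, ⊤} := by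
  intro h
  have : (r : EReal) ∈ ({⊥, ⊤} : Set EReal) := h ▸ Set.mem_insert_of_mem _ rfl
  rcases this with h' | h'
  · exact EReal.coe_ne_bot r h'
  · exact EReal.coe_ne_top r h'

lemma pair_ne_bb : ({⊥, ⊥} : Set EReal) ≠ {⊥, ⊤} := by
  intro h
  have : (⊤ : EReal) ∈ ({⊥, ⊥} : Set EReal) := h ▸ Set.mem_insert_of_mem _ rfl
  simp at this

lemma pair_ne_tt : ({⊤, ⊤} : Set EReal) ≠ {⊥, ⊤} := by
  intro h
  have : (⊥ : EReal) ∈ ({⊤, ⊤} : Set EReal) := h ▸ Set.mem_insert _ _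
  simp at this

lemma Icc_not_singleton {p q : EReal} (h : p < q) : ¬∃ y : EReal, Set.Icc p q = {y} := by
  rintro ⟨y, hy⟩
  have hp : p ∈ Set.Icc p q := ⟨le_rfl, h.le⟩
  have hq : q ∈ Set.Icc p q := ⟨h.le, le_rfl⟩
  rw [hy] at hp hq
  exact h.ne (hp.trans hq.symm)

lemma empty_not_singleton : ¬∃ y : EReal, (∅ : Set EReal) = {y} := by
  rintro ⟨y, hy⟩
  exact (Set.singleton_ne_empty y) hy.symm

lemma add_le_zero_of_toE {b c : Rb} (h : toE b ≤ -toE c) : b + c ≤ 0 := by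
  rcases rb_cases b with hb | ⟨r, hb⟩
  · rw [hb, WithBot.bot_add]; exact bot_le
  · rcases rb_cases c with hc | ⟨s, hc⟩
    · rw [hc, WithBot.add_bot]; exact bot_le
    · rw [hb, hc] at h ⊢
      rw [toE_coe, toE_coe, ← EReal.coe_neg] at h
      have : r ≤ -s := by exact_mod_cast h
      exact_mod_cast by linarith

lemma zeroMat_idem : tMul (fun _ _ : Fin 2 => (⊥ : Rb)) (fun _ _ : Fin 2 => (⊥ : Rb)) = fun _ _ : Fin 2 => (⊥ : Rb) := by
  funext i j
  rw [tMul_apply]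
  simp

lemma zeroMat_PC : PC (fun _ _ : Fin 2 => (⊥ : Rb)) = ∅ := PC_empty _ (fun _ _ => rfl)
lemma zeroMat_PR : PR (fun _ _ : Fin 2 => (⊥ : Rb)) = ∅ := by
  rw [PR_eq_PC_transpose]
  exact PC_empty _ (fun _ _ => rfl)

lemma ereal_cases (x : EReal) : x = ⊥ ∨ (∃ r : ℝ, x = (r : EReal)) ∨ x = ⊤ := by
  induction x using EReal.rec with
  | bot => exact Or.inl rfl
  | coe r => exact Or.inr (Or.inl ⟨r, rfl⟩)
  | top => exact Or.inr (Or.inr rfl)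

@[simp] lemma toE_zero : toE (0 : Rb) = 0 := rfl

lemma exists_uv (x y : EReal) (hxy : ({x, y} : Set EReal) ≠ {⊥, ⊤}) :
    ∃ u v : Fin 2 → Rb, (v 0 + u 0) ⊔ (v 1 + u 1) = 0 ∧ projPt u = x ∧ projPt v = y := by
  rcases ereal_cases x with hx | ⟨r, hx⟩ | hx <;> rcases ereal_cases y with hy | ⟨s, hy⟩ | hy <;>
    subst hx <;> subst hy
  · -- ⊥ ⊥
    refine ⟨![0, ⊥], ![0, ⊥], ?_, ?_, ?_⟩
    · show ((0 : Rb) + 0) ⊔ (⊥ + ⊥) = 0; simp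
    · show toE ⊥ - toE (0 : Rb) = ⊥; simp
    · show toE ⊥ - toE (0 : Rb) = ⊥; simp
  · -- ⊥ s
    refine ⟨![0, ⊥], ![0, (s : Rb)], ?_, ?_, ?_⟩
    · show ((0 : Rb) + 0) ⊔ ((s : Rb) + ⊥) = 0; simp
    · show toE ⊥ - toE (0 : Rb) = ⊥; simp
    · show toE ((s : Rb)) - toE (0 : Rb) = (s : EReal); simp
  · -- ⊥ ⊤ : contradiction
    exact absurd rfl hxy
  · -- r ⊥
    refine ⟨![0, (r : Rb)], ![0, ⊥], ?_, ?_, ?_⟩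
    · show ((0 : Rb) + 0) ⊔ (⊥ + (r : Rb)) = 0; simp
    · show toE ((r : Rb)) - toE (0 : Rb) = (r : EReal); simp
    · show toE ⊥ - toE (0 : Rb) = ⊥; simp
  · -- r s
    set t : ℝ := -(max 0 (r + s)) with ht
    refine ⟨![0, (r : Rb)], ![(t : Rb), ((t + s : ℝ) : Rb)], ?_, ?_, ?_⟩
    · show ((t : Rb) + 0) ⊔ (((t + s : ℝ) : Rb) + (r : Rb)) = 0
      rw [add_zero]
      have h2 : ((t + s : ℝ) : Rb) + (r : Rb) = ((t + s + r : ℝ) : Rb) := by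
        exact_mod_cast rfl
      rw [h2, ← WithBot.coe_sup]
      have hmax : t ⊔ (t + s + r) = 0 := by
        rcases le_total 0 (r + s) with h | h
        · have h1 : max 0 (r + s) = r + s := max_eq_right h
          rw [ht, h1, show -(r + s) + s + r = (0 : ℝ) by ring]
          exact sup_eq_right.mpr (by linarith)
        · have h1 : max 0 (r + s) = 0 := max_eq_left (by linarith)
          rw [ht, h1]
          rw [show -(0 : ℝ) = 0 by ring]
          exact sup_eq_left.mpr (by linarith)
      rw [hmax]; rfl
    · show toE ((r : Rb)) - toE (0 : Rb) = (r : EReal); simp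
    · show toE (((t + s : ℝ)) : Rb) - toE ((t : Rb)) = (s : EReal)
      rw [toE_coe, toE_coe, coe_sub_coe']
      norm_num
  · -- r ⊤
    refine ⟨![((-r : ℝ) : Rb), 0], ![⊥, 0], ?_, ?_, ?_⟩
    · show (⊥ + ((-r : ℝ) : Rb)) ⊔ ((0 : Rb) + 0) = 0; simp
    · show toE (0 : Rb) - toE (((-r : ℝ)) : Rb) = (r : EReal)
      rw [toE_zero, toE_coe]
      rw [show (0 : EReal) = ((0 : ℝ) : EReal) by rfl, coe_sub_coe']
      norm_num
    · show toE (0 : Rb) - toE ⊥ = ⊤; simp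
  · -- ⊤ ⊥ : contradiction
    exact absurd (Set.pair_comm ⊤ ⊥) hxy
  · -- ⊤ s
    refine ⟨![⊥, 0], ![((-s : ℝ) : Rb), 0], ?_, ?_, ?_⟩
    · show (((-s : ℝ) : Rb) + ⊥) ⊔ ((0 : Rb) + 0) = 0; simp
    · show toE (0 : Rb) - toE ⊥ = ⊤; simp
    · show toE (0 : Rb) - toE (((-s : ℝ)) : Rb) = (s : EReal)
      rw [toE_zero, toE_coe]
      rw [show (0 : EReal) = ((0 : ℝ) : EReal) by rfl, coe_sub_coe']
      norm_num
  · -- ⊤ ⊤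
    refine ⟨![⊥, 0], ![⊥, 0], ?_, ?_, ?_⟩
    · show (⊥ + ⊥) ⊔ ((0 : Rb) + 0) = 0; simp
    · show toE (0 : Rb) - toE ⊥ = ⊤; simp
    · show toE (0 : Rb) - toE ⊥ = ⊤; simp

lemma backward_dir (M N : Set EReal) (hN : IsClosedConvex N)
    (h : (∃ x y : EReal, M = {x} ∧ N = {y} ∧ ({x, y} : Set EReal) ≠ {⊥, ⊤}) ∨
      (M = (fun z : EReal => -z) '' N ∧ ¬∃ y : EReal, N = {y})) :
    ∃ E : Mat2, tMul E E = E ∧ PC E = M ∧ PR E = N := by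
  rcases h with ⟨x, y, hMx, hNy, hxy⟩ | ⟨hMN, hNs⟩
  · obtain ⟨u, v, hs, hu, hv⟩ := exists_uv x y hxy
    exact ⟨fun i j => u i + v j, rank1_idem u v hs,
      by rw [rank1_PC u v hs, hu, hMx], by rw [rank1_PR u v hs, hv, hNy]⟩
  · rcases hN with hNe | ⟨p, q, hpq, hNIcc⟩
    · refine ⟨fun _ _ : Fin 2 => (⊥ : Rb), zeroMat_idem, ?_, ?_⟩
      · rw [zeroMat_PC, hMN, hNe, Set.image_empty]
      · rw [zeroMat_PR, hNe]
    · subst hNIcc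
      have hlt : p < q := by
        rcases hpq.lt_or_eq with h | h
        · exact h
        · exact absurd ⟨p, by rw [← h, Set.Icc_self]⟩ hNs
      obtain ⟨b, hb⟩ : ∃ b : Rb, toE b = p := by
        rcases ereal_cases p with hp | ⟨r, hp⟩ | hp
        · exact ⟨⊥, by rw [hp]; rfl⟩
        · exact ⟨(r : Rb), by rw [hp]; rfl⟩
        · exfalso; rw [hp] at hlt; exact not_top_lt hlt
      obtain ⟨c, hc⟩ : ∃ c : Rb, -toE c = q := by
        rcases ereal_cases q with hq | ⟨s, hq⟩ | hq
        · exfalso; rw [hq] at hlt; exact not_lt_bot hlt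
        · refine ⟨((-s : ℝ) : Rb), ?_⟩
          rw [hq, toE_coe, ← EReal.coe_neg]
          norm_num
        · exact ⟨⊥, by rw [hq]; simp⟩
      have hbc : b + c ≤ 0 := add_le_zero_of_toE (by rw [hb, hc]; exact hlt.le)
      refine ⟨![![0, b], ![c, 0]], Ediag_idem b c hbc, ?_, ?_⟩
      · rw [Ediag_PC b c hbc, hMN, neg_image_Icc, ← hc, neg_neg, hb]
      · rw [Ediag_PR b c hbc, hb, hc]

attribute [simp] coe_sub_bot'

lemma coe_eq_coe' {r s : ℝ} (h : (r : Rb) = (s : Rb)) : r = s := by exact_mod_cast h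

lemma forward_dir (E : Mat2) (hE : tMul E E = E) :
    (∃ x y : EReal, PC E = {x} ∧ PR E = {y} ∧ ({x, y} : Set EReal) ≠ {⊥, ⊤}) ∨
      (PC E = (fun z : EReal => -z) '' PR E ∧ ¬∃ y : EReal, PR E = {y}) := by
  have e00 : (E 0 0 + E 0 0) ⊔ (E 0 1 + E 1 0) = E 0 0 := by
    have h := congrFun (congrFun hE 0) 0; rwa [tMul_apply] at h
  have e01 : (E 0 0 + E 0 1) ⊔ (E 0 1 + E 1 1) = E 0 1 := by
    have h := congrFun (congrFun hE 0) 1; rwa [tMul_apply] at h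
  have e11 : (E 1 0 + E 0 1) ⊔ (E 1 1 + E 1 1) = E 1 1 := by
    have h := congrFun (congrFun hE 1) 1; rwa [tMul_apply] at h
  have e10 : (E 1 0 + E 0 0) ⊔ (E 1 1 + E 1 0) = E 1 0 := by
    have h := congrFun (congrFun hE 1) 0; rwa [tMul_apply] at h
  have hext := mat_ext E
  rcases rb_cases (E 0 0) with ha | ⟨a, ha⟩ <;> rcases rb_cases (E 0 1) with hb | ⟨b, hb⟩ <;>
    rcases rb_cases (E 1 0) with hc | ⟨c, hc⟩ <;> rcases rb_cases (E 1 1) with hd | ⟨d, hd⟩ <;>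
    simp only [ha, hb, hc, hd] at e00 e01 e10 e11 hext <;> rw [hext] <;> clear hext ha hb hc hd hE
  -- case (⊥,⊥,⊥,⊥)
  · right
    constructor
    · rw [PC_explicit_empty, PR_explicit, PC_explicit_empty, Set.image_empty]
    · rw [PR_explicit, PC_explicit_empty]
      exact empty_not_singleton
  -- case (⊥,⊥,⊥,d)
  · left
    refine ⟨⊤, ⊤, ?_, ?_, pair_ne_tt⟩
    · rw [PC_explicit_single1 ⊥ (↑d) (by simp)]; simp
    · rw [PR_explicit, PC_explicit_single1 ⊥ (↑d) (by simp)]; simp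
  -- case (⊥,⊥,c,⊥) : impossible
  · exfalso; simp at e10
  -- case (⊥,⊥,c,d)
  · left
    refine ⟨⊤, ((d - c : ℝ) : EReal), ?_, ?_, pair_ne_right _ _⟩
    · rw [PC_explicit_Icc ⊥ ⊥ (↑c) (↑d) (by simp) (by simp)]
      simp [Set.Icc_self]
    · rw [PR_explicit, PC_explicit_single1 (↑c) (↑d) (by simp)]
      simp only [toE_coe, coe_sub_coe']
  -- case (⊥,b,⊥,⊥) : impossible
  · exfalso; simp at e01
  -- case (⊥,b,⊥,d)
  · left
    refine ⟨((d - b : ℝ) : EReal), ⊤, ?_, ?_, pair_ne_left _ _⟩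
    · rw [PC_explicit_single1 (↑b) (↑d) (by simp)]
      simp only [toE_coe, coe_sub_coe']
    · rw [PR_explicit, PC_explicit_Icc ⊥ ⊥ (↑b) (↑d) (by simp) (by simp)]
      simp [Set.Icc_self]
  -- case (⊥,b,c,⊥) : impossible
  · exfalso; simp [WithBot.add_eq_bot] at e00
  -- case (⊥,b,c,d) : impossible
  · exfalso; simp [WithBot.add_eq_bot] at e00
  -- case (a,⊥,⊥,⊥)
  · left
    refine ⟨⊥, ⊥, ?_, ?_, pair_ne_bb⟩
    · rw [PC_explicit_single0 (↑a) ⊥ (by simp)]; simp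
    · rw [PR_explicit, PC_explicit_single0 (↑a) ⊥ (by simp)]; simp
  -- case (a,⊥,⊥,d)
  · right
    have hPC : PC ![![(↑a : Rb), ⊥], ![⊥, ↑d]] = Set.Icc (⊥ : EReal) ⊤ := by
      rw [PC_explicit_Icc (↑a) ⊥ ⊥ (↑d) (by simp) (by simp)]; simp
    have hPR : PR ![![(↑a : Rb), ⊥], ![⊥, ↑d]] = Set.Icc (⊥ : EReal) ⊤ := by
      rw [PR_explicit, PC_explicit_Icc (↑a) ⊥ ⊥ (↑d) (by simp) (by simp)]; simp
    rw [hPC, hPR, neg_image_Icc]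
    constructor
    · simp
    · exact Icc_not_singleton bot_lt_top
  -- case (a,⊥,c,⊥)
  · left
    refine ⟨((c - a : ℝ) : EReal), ⊥, ?_, ?_, pair_ne_left _ _⟩
    · rw [PC_explicit_single0 (↑a) (↑c) (by simp)]
      simp only [toE_coe, coe_sub_coe']
    · rw [PR_explicit, PC_explicit_Icc (↑a) (↑c) ⊥ ⊥ (by simp) (by simp)]
      simp [Set.Icc_self]
  -- case (a,⊥,c,d)
  · right
    have ha0 : a = 0 := by
      have h : ((a + a : ℝ) : Rb) = ↑a := by rw [← e00]; push_cast; simp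
      have h2 := coe_eq_coe' h; linarith
    have hd0 : d = 0 := by
      have h : ((d + d : ℝ) : Rb) = ↑d := by rw [← e11]; push_cast; simp
      have h2 := coe_eq_coe' h; linarith
    subst ha0; subst hd0
    have hPC : PC ![![((0 : ℝ) : Rb), ⊥], ![↑c, ((0 : ℝ) : Rb)]] =
        Set.Icc ((c : ℝ) : EReal) ⊤ := by
      rw [PC_explicit_Icc ((0 : ℝ) : Rb) ⊥ (↑c) ((0 : ℝ) : Rb) (by simp) (by simp)]
      norm_num
    have hPR : PR ![![((0 : ℝ) : Rb), ⊥], ![↑c, ((0 : ℝ) : Rb)]] =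
        Set.Icc (⊥ : EReal) ((-c : ℝ) : EReal) := by
      rw [PR_explicit, PC_explicit_Icc ((0 : ℝ) : Rb) (↑c) ⊥ ((0 : ℝ) : Rb) (by simp) (by simp)]
      norm_num
    rw [hPC, hPR, neg_image_Icc]
    constructor
    · rw [← EReal.coe_neg]
      norm_num
    · exact Icc_not_singleton (by exact_mod_cast EReal.bot_lt_coe _)
  -- case (a,b,⊥,⊥)
  · left
    refine ⟨⊥, ((b - a : ℝ) : EReal), ?_, ?_, pair_ne_right _ _⟩
    · rw [PC_explicit_Icc (↑a) (↑b) ⊥ ⊥ (by simp) (by simp)]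
      simp [Set.Icc_self]
    · rw [PR_explicit, PC_explicit_single0 (↑a) (↑b) (by simp)]
      simp only [toE_coe, coe_sub_coe']
  -- case (a,b,⊥,d)
  · right
    have ha0 : a = 0 := by
      have h : ((a + a : ℝ) : Rb) = ↑a := by rw [← e00]; push_cast; simp
      have h2 := coe_eq_coe' h; linarith
    have hd0 : d = 0 := by
      have h : ((d + d : ℝ) : Rb) = ↑d := by rw [← e11]; push_cast; simp
      have h2 := coe_eq_coe' h; linarith
    subst ha0; subst hd0
    have hPC : PC ![![((0 : ℝ) : Rb), ↑b], ![⊥, ((0 : ℝ) : Rb)]] =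
        Set.Icc (⊥ : EReal) ((-b : ℝ) : EReal) := by
      rw [PC_explicit_Icc ((0 : ℝ) : Rb) (↑b) ⊥ ((0 : ℝ) : Rb) (by simp) (by simp)]
      norm_num
    have hPR : PR ![![((0 : ℝ) : Rb), ↑b], ![⊥, ((0 : ℝ) : Rb)]] =
        Set.Icc ((b : ℝ) : EReal) ⊤ := by
      rw [PR_explicit, PC_explicit_Icc ((0 : ℝ) : Rb) ⊥ (↑b) ((0 : ℝ) : Rb) (by simp) (by simp)]
      norm_num
    rw [hPC, hPR, neg_image_Icc]
    constructor
    · rw [← EReal.coe_neg]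
      norm_num
    · exact Icc_not_singleton (by exact_mod_cast EReal.coe_lt_top _)
  -- case (a,b,c,⊥) : impossible
  · exfalso; simp [WithBot.add_eq_bot] at e11
  -- case (a,b,c,d) : all real
  · have h01 : (a + b) ⊔ (b + d) = b := by
      rw [← WithBot.coe_add, ← WithBot.coe_add, ← WithBot.coe_sup] at e01
      exact coe_eq_coe' e01
    have h00 : (a + a) ⊔ (b + c) = a := by
      rw [← WithBot.coe_add, ← WithBot.coe_add, ← WithBot.coe_sup] at e00
      exact coe_eq_coe' e00
    have h11 : (c + b) ⊔ (d + d) = d := by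
      rw [← WithBot.coe_add, ← WithBot.coe_add, ← WithBot.coe_sup] at e11
      exact coe_eq_coe' e11
    have hale : a ≤ 0 := by
      have := le_sup_left.trans h01.le
      exact by linarith [this]
    have hdle : d ≤ 0 := by
      have := le_sup_right.trans h01.le
      exact by linarith [this]
    have hor : a = 0 ∨ d = 0 := by
      rcases le_total (a + b) (b + d) with h | h
      · right; rw [sup_eq_right.mpr h] at h01; linarith
      · left; rw [sup_eq_left.mpr h] at h01; linarith
    rcases hor with ha0 | hd0
    · subst ha0
      rcases hdle.lt_or_eq with hdlt | hd0
      · -- a = 0, d < 0 : then c + b = d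
        have hcb : c + b = d := by
          rcases le_total (c + b) (d + d) with h | h
          · rw [sup_eq_right.mpr h] at h11; linarith
          · rw [sup_eq_left.mpr h] at h11; exact h11
        subst hcb
        left
        refine ⟨((c : ℝ) : EReal), ((b : ℝ) : EReal), ?_, ?_, pair_ne_left _ _⟩
        · rw [PC_explicit_Icc ((0 : ℝ) : Rb) (↑b) (↑c) (↑(c + b)) (by simp) (by simp)]
          simp only [toE_coe, coe_sub_coe']
          rw [show (c - 0 : ℝ) = c by ring, show (c + b - b : ℝ) = c by ring]
          simp [Set.Icc_self]
        · rw [PR_explicit, PC_explicit_Icc ((0 : ℝ) : Rb) (↑c) (↑b) (↑(c + b)) (by simp) (by simp)]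
          simp only [toE_coe, coe_sub_coe']
          rw [show (b - 0 : ℝ) = b by ring, show (c + b - c : ℝ) = b by ring]
          simp [Set.Icc_self]
      · -- a = 0, d = 0
        subst hd0
        have hbc : b + c ≤ 0 := by
          have := le_sup_right.trans h00.le
          linarith [this]
        by_cases hbc0 : b + c = 0
        · left
          refine ⟨((c : ℝ) : EReal), ((b : ℝ) : EReal), ?_, ?_, pair_ne_left _ _⟩
          · rw [PC_explicit_Icc ((0 : ℝ) : Rb) (↑b) (↑c) ((0 : ℝ) : Rb) (by simp) (by simp)]
            simp only [toE_coe, coe_sub_coe']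
            rw [show (c - 0 : ℝ) = c by ring, show (0 - b : ℝ) = c by linarith]
            simp [Set.Icc_self]
          · rw [PR_explicit, PC_explicit_Icc ((0 : ℝ) : Rb) (↑c) (↑b) ((0 : ℝ) : Rb) (by simp) (by simp)]
            simp only [toE_coe, coe_sub_coe']
            rw [show (b - 0 : ℝ) = b by ring, show (0 - c : ℝ) = b by linarith]
            simp [Set.Icc_self]
        · right
          have hlt : b + c < 0 := lt_of_le_of_ne hbc hbc0
          have hPC : PC ![![((0 : ℝ) : Rb), ↑b], ![↑c, ((0 : ℝ) : Rb)]] =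
              Set.Icc ((c : ℝ) : EReal) ((-b : ℝ) : EReal) := by
            rw [PC_explicit_Icc ((0 : ℝ) : Rb) (↑b) (↑c) ((0 : ℝ) : Rb) (by simp) (by simp)]
            simp only [toE_coe, coe_sub_coe']
            rw [show (c - 0 : ℝ) = c by ring, show (0 - b : ℝ) = -b by ring]
            have hle : ((c : ℝ) : EReal) ≤ ((-b : ℝ) : EReal) := by
              exact_mod_cast by linarith
            rw [inf_eq_left.mpr hle, sup_eq_right.mpr hle]
          have hPR : PR ![![((0 : ℝ) : Rb), ↑b], ![↑c, ((0 : ℝ) : Rb)]] =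
              Set.Icc ((b : ℝ) : EReal) ((-c : ℝ) : EReal) := by
            rw [PR_explicit, PC_explicit_Icc ((0 : ℝ) : Rb) (↑c) (↑b) ((0 : ℝ) : Rb) (by simp) (by simp)]
            simp only [toE_coe, coe_sub_coe']
            rw [show (b - 0 : ℝ) = b by ring, show (0 - c : ℝ) = -c by ring]
            have hle : ((b : ℝ) : EReal) ≤ ((-c : ℝ) : EReal) := by
              exact_mod_cast by linarith
            rw [inf_eq_left.mpr hle, sup_eq_right.mpr hle]
          rw [hPC, hPR, neg_image_Icc]
          constructor
          · rw [← EReal.coe_neg, ← EReal.coe_neg]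
            norm_num
          · apply Icc_not_singleton
            exact_mod_cast by linarith
    · subst hd0
      rcases hale.lt_or_eq with halt | ha0
      · -- d = 0, a < 0 : then b + c = a
        have hbc : b + c = a := by
          rcases le_total (a + a) (b + c) with h | h
          · rw [sup_eq_right.mpr h] at h00; exact h00
          · rw [sup_eq_left.mpr h] at h00; linarith
        subst hbc
        left
        refine ⟨((-b : ℝ) : EReal), ((-c : ℝ) : EReal), ?_, ?_, pair_ne_left _ _⟩
        · rw [PC_explicit_Icc (↑(b + c)) (↑b) (↑c) ((0 : ℝ) : Rb) (by simp) (by simp)]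
          simp only [toE_coe, coe_sub_coe']
          rw [show (c - (b + c) : ℝ) = -b by ring, show (0 - b : ℝ) = -b by ring]
          simp [Set.Icc_self]
        · rw [PR_explicit, PC_explicit_Icc (↑(b + c)) (↑c) (↑b) ((0 : ℝ) : Rb) (by simp) (by simp)]
          simp only [toE_coe, coe_sub_coe']
          rw [show (b - (b + c) : ℝ) = -c by ring, show (0 - c : ℝ) = -c by ring]
          simp [Set.Icc_self]
      · -- a = 0, d = 0 again
        subst ha0
        have hbc : b + c ≤ 0 := by
          have := le_sup_right.trans h00.le
          linarith [this]
        by_cases hbc0 : b + c = 0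
        · left
          refine ⟨((c : ℝ) : EReal), ((b : ℝ) : EReal), ?_, ?_, pair_ne_left _ _⟩
          · rw [PC_explicit_Icc ((0 : ℝ) : Rb) (↑b) (↑c) ((0 : ℝ) : Rb) (by simp) (by simp)]
            simp only [toE_coe, coe_sub_coe']
            rw [show (c - 0 : ℝ) = c by ring, show (0 - b : ℝ) = c by linarith]
            simp [Set.Icc_self]
          · rw [PR_explicit, PC_explicit_Icc ((0 : ℝ) : Rb) (↑c) (↑b) ((0 : ℝ) : Rb) (by simp) (by simp)]
            simp only [toE_coe, coe_sub_coe']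
            rw [show (b - 0 : ℝ) = b by ring, show (0 - c : ℝ) = b by linarith]
            simp [Set.Icc_self]
        · right
          have hlt : b + c < 0 := lt_of_le_of_ne hbc hbc0
          have hPC : PC ![![((0 : ℝ) : Rb), ↑b], ![↑c, ((0 : ℝ) : Rb)]] =
              Set.Icc ((c : ℝ) : EReal) ((-b : ℝ) : EReal) := by
            rw [PC_explicit_Icc ((0 : ℝ) : Rb) (↑b) (↑c) ((0 : ℝ) : Rb) (by simp) (by simp)]
            simp only [toE_coe, coe_sub_coe']
            rw [show (c - 0 : ℝ) = c by ring, show (0 - b : ℝ) = -b by ring]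
            have hle : ((c : ℝ) : EReal) ≤ ((-b : ℝ) : EReal) := by
              exact_mod_cast by linarith
            rw [inf_eq_left.mpr hle, sup_eq_right.mpr hle]
          have hPR : PR ![![((0 : ℝ) : Rb), ↑b], ![↑c, ((0 : ℝ) : Rb)]] =
              Set.Icc ((b : ℝ) : EReal) ((-c : ℝ) : EReal) := by
            rw [PR_explicit, PC_explicit_Icc ((0 : ℝ) : Rb) (↑c) (↑b) ((0 : ℝ) : Rb) (by simp) (by simp)]
            simp only [toE_coe, coe_sub_coe']
            rw [show (b - 0 : ℝ) = b by ring, show (0 - c : ℝ) = -c by ring]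
            have hle : ((b : ℝ) : EReal) ≤ ((-c : ℝ) : EReal) := by
              exact_mod_cast by linarith
            rw [inf_eq_left.mpr hle, sup_eq_right.mpr hle]
          rw [hPC, hPR, neg_image_Icc]
          constructor
          · rw [← EReal.coe_neg, ← EReal.coe_neg]
            norm_num
          · apply Icc_not_singleton
            exact_mod_cast by linarith

/-- for closed convex `M, N ⊆ ℝ̂`, there is an idempotent `E` with
`PC(E) = M` and `PR(E) = N` iff either `M, N` are singletons `{x}, {y}` with
`{x, y} ≠ {-∞, +∞}`, or `M = -N` and `N` is not a singleton. -/
theorem idempotent_H_classes (M N : Set EReal)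
    (hM : IsClosedConvex M) (hN : IsClosedConvex N) :
    (∃ E : Mat2, tMul E E = E ∧ PC E = M ∧ PR E = N) ↔
      ((∃ x y : EReal, M = {x} ∧ N = {y} ∧ ({x, y} : Set EReal) ≠ {⊥, ⊤}) ∨
        (M = (fun z : EReal => -z) '' N ∧ ¬∃ y : EReal, N = {y})) := by
  constructor
  · rintro ⟨E, hE, hPC, hPR⟩
    rcases forward_dir E hE with ⟨x, y, h1, h2, h3⟩ | ⟨h1, h2⟩
    · exact Or.inl ⟨x, y, hPC ▸ h1, hPR ▸ h2, h3⟩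
    · exact Or.inr ⟨by rw [← hPC, ← hPR]; exact h1, by rw [← hPR]; exact h2⟩
  · exact backward_dir M N hN
end
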